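/- arXiv:1909.11172 — 7 statements merged into one kernel-verified Lean document; each statement's English description precedes it below -/
import Mathlib

section
/- For tensors symmetric in their first k indices and in their last ℓ indices on an n-dimensional inner product space with n = 3, the commutator of the trace operator μ and the symmetrized metric product λ satisfies μλw = ((k+ℓ+1)/(kℓ)) w + ((k-1)(ℓ-1)/(kℓ)) λμw for any tensor w symmetric in its first k−1 and last ℓ−1 indices. -/
open Matrix BigOperators

noncomputable section

/-- Tensors on the 3-dimensional space with `k` indices in the first (symmetric) group and
`l` indices in the second (symmetric) group. -/
abbrev Tensor (k l : ℕ) := (Fin k → Fin 3) → (Fin l → Fin 3) → ℝ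

/-- Symmetrization over the first group of indices. -/
def symFst {k l : ℕ} (f : Tensor k l) : Tensor k l :=
  fun I J => (1 / (Nat.factorial k : ℝ)) * ∑ σ : Equiv.Perm (Fin k), f (I ∘ σ) J

/-- Symmetrization over the second group of indices. -/
def symSnd {k l : ℕ} (f : Tensor k l) : Tensor k l :=
  fun I J => (1 / (Nat.factorial l : ℝ)) * ∑ τ : Equiv.Perm (Fin l), f I (J ∘ τ)

/-- `f` is symmetric in its first group of indices and in its second group of indices. -/
def IsSym {k l : ℕ} (f : Tensor k l) : Prop :=
  ∀ (I : Fin k → Fin 3) (J : Fin l → Fin 3) (σ : Equiv.Perm (Fin k)) (τ : Equiv.Perm (Fin l)),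
    f (I ∘ σ) (J ∘ τ) = f I J

/-- The symmetrized tensor product with the metric `g`:
`(λ w)_{i₁…i_k j₁…j_ℓ} = Sym(i₁…i_k) Sym(j₁…j_ℓ) (g_{i_k j_ℓ} w_{i₁…i_{k-1} j₁…j_{ℓ-1}})`. -/
def lamOp (g : Matrix (Fin 3) (Fin 3) ℝ) {k l : ℕ} (w : Tensor k l) : Tensor (k + 1) (l + 1) :=
  symFst (symSnd (fun I J =>
    g (I (Fin.last k)) (J (Fin.last l)) * w (I ∘ Fin.castSucc) (J ∘ Fin.castSucc)))

/-- The trace operator `(μ u)_{i₁…i_{k-1} j₁…j_{ℓ-1}} = u_{i₁…i_k j₁…j_ℓ} g^{i_k j_ℓ}`,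
contracting the last index of each group with the inverse metric `ginv`. -/
def muOp (ginv : Matrix (Fin 3) (Fin 3) ℝ) {k l : ℕ} (u : Tensor (k + 1) (l + 1)) : Tensor k l :=
  fun I J => ∑ a : Fin 3, ∑ b : Fin 3, ginv a b * u (Fin.snoc I a) (Fin.snoc J b)

/-!
For `w` symmetric in each group of indices, the two symmetrisations in `λ` collapse to an
average over the slots that carry the metric:
`(λw)(I, J) = (kℓ)⁻¹ ∑_{p,q} g(I_p, J_q) w(I∖p, J∖q)`.
Applying `μ` contracts the two appended indices `a, b` with `g⁻¹`, and the sum splits according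
to whether `p` and `q` are the appended slots. If neither is, the contraction lands on `w` and
gives `(k-1)(ℓ-1) λμw`; if exactly one is, `∑ g⁻¹ g = δ` puts the appended index back in
place and gives `(k-1) w` or `(ℓ-1) w`; if both are, the trace `tr (g⁻¹ g) = 3` gives `3 w`.
-/

open Equiv Finset
open scoped Nat

namespace Equiv.Perm

def extendLast {k : ℕ} (e : Perm (Fin k)) : Perm (Fin (k + 1)) :=
  permCongr finSuccEquivLast.symm e.optionCongr

@[simp] lemma extendLast_castSucc {k : ℕ} (e : Perm (Fin k)) (i : Fin k) :
    extendLast e i.castSucc = (e i).castSucc := by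
  simp [extendLast]

@[simp] lemma extendLast_last {k : ℕ} (e : Perm (Fin k)) :
    extendLast e (Fin.last k) = Fin.last k := by
  simp [extendLast]

lemma comp_extendLast_comp_castSucc {α : Type*} {k : ℕ} (I : Fin (k + 1) → α)
    (e : Perm (Fin k)) :
    I ∘ extendLast e ∘ Fin.castSucc = I ∘ Fin.castSucc ∘ e := by
  ext; simp

lemma snoc_comp_extendLast {α : Type*} {k : ℕ} (I : Fin k → α) (a : α) (e : Perm (Fin k)) :
    Fin.snoc I a ∘ extendLast e = Fin.snoc (I ∘ e) a := by
  ext i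
  induction i using Fin.lastCases <;> simp

def decomposeLast (k : ℕ) : Perm (Fin (k + 1)) ≃ Option (Fin k) × Perm (Fin k) :=
  (permCongr finSuccEquivLast).trans decomposeOption

lemma coe_decomposeLast_symm {k : ℕ} (o : Option (Fin k)) (e : Perm (Fin k)) :
    ⇑((decomposeLast k).symm (o, e)) =
      swap (Fin.last k) (finSuccEquivLast.symm o) ∘ extendLast e := by
  ext x
  have h := Equiv.ext_iff.mp (symm_trans_swap_trans none o finSuccEquivLast.symm) (extendLast e x)
  simp only [trans_apply, symm_symm, finSuccEquivLast_symm_none] at h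
  rw [Function.comp_apply, ← h]
  simp [decomposeLast, extendLast, mul_apply]

end Equiv.Perm

open Equiv.Perm

lemma sum_perm_comp_eq_factorial_mul_sum_swap {α : Type*} {k : ℕ}
    (f : (Fin (k + 1) → α) → ℝ)
    (hf : ∀ I (e : Perm (Fin k)), f (I ∘ extendLast e) = f I) (I : Fin (k + 1) → α) :
    ∑ σ : Perm (Fin (k + 1)), f (I ∘ σ) = k ! * ∑ p, f (I ∘ swap (Fin.last k) p) := by
  rw [← (decomposeLast k).symm.sum_comp, Fintype.sum_prod_type]
  simp_rw [coe_decomposeLast_symm, ← Function.comp_assoc, hf, sum_const, card_univ,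
    Fintype.card_perm, Fintype.card_fin, nsmul_eq_mul, ← mul_sum]
  rw [finSuccEquivLast.symm.sum_comp (fun p => f (I ∘ swap (Fin.last k) p))]

namespace IsSym

variable {k l : ℕ} {w : Tensor k l}

lemma eq (hw : IsSym w) (I : Fin k → Fin 3) (J : Fin l → Fin 3) (σ : Perm (Fin k))
    (τ : Perm (Fin l)) : w (I ∘ σ) (J ∘ τ) = w I J :=
  hw I J σ τ

lemma comp_left (hw : IsSym w) (I : Fin k → Fin 3) (J : Fin l → Fin 3) (σ : Perm (Fin k)) :
    w (I ∘ σ) J = w I J := by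
  simpa using hw I J σ 1

lemma comp_right (hw : IsSym w) (I : Fin k → Fin 3) (J : Fin l → Fin 3) (τ : Perm (Fin l)) :
    w I (J ∘ τ) = w I J := by
  simpa using hw I J 1 τ

end IsSym

lemma symFst_apply_of_invariant {k l : ℕ} {f : Tensor (k + 1) l}
    (hf : ∀ I J (e : Perm (Fin k)), f (I ∘ extendLast e) J = f I J) (I J) :
    symFst f I J = ((k : ℝ) + 1)⁻¹ * ∑ p, f (I ∘ swap (Fin.last k) p) J := by
  rw [symFst, sum_perm_comp_eq_factorial_mul_sum_swap (f · J) (hf · J), Nat.factorial_succ]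
  push_cast
  field_simp

lemma symSnd_apply_of_invariant {k l : ℕ} {f : Tensor k (l + 1)}
    (hf : ∀ I J (e : Perm (Fin l)), f I (J ∘ extendLast e) = f I J) (I J) :
    symSnd f I J = ((l : ℝ) + 1)⁻¹ * ∑ q, f I (J ∘ swap (Fin.last l) q) := by
  rw [symSnd, sum_perm_comp_eq_factorial_mul_sum_swap (f I) (hf I), Nat.factorial_succ]
  push_cast
  field_simp

/-- `I` with its `p`-th entry removed, up to order: the last entry moves into slot `p`. -/
def dropIdx {α : Type*} {k : ℕ} (p : Fin (k + 1)) (I : Fin (k + 1) → α) : Fin k → α :=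
  I ∘ swap (Fin.last k) p ∘ Fin.castSucc

section dropIdx

variable {α : Type*} {k : ℕ}

@[simp] lemma dropIdx_last_snoc (I : Fin (k + 1) → α) (a : α) :
    dropIdx (Fin.last (k + 1)) (Fin.snoc I a : Fin (k + 2) → α) = I := by
  ext i; simp [dropIdx]

@[simp] lemma dropIdx_castSucc_snoc (I : Fin (k + 1) → α) (a : α) (p : Fin (k + 1)) :
    dropIdx p.castSucc (Fin.snoc I a : Fin (k + 2) → α) = Function.update I p a := by
  ext i
  rcases eq_or_ne i p with rfl | h
  · simp [dropIdx]
  · have h_ne_last : (i.castSucc : Fin (k + 2)) ≠ Fin.last (k + 1) :=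
      (Fin.castSucc_lt_last i).ne
    have h_ne_p : (i.castSucc : Fin (k + 2)) ≠ p.castSucc := by simpa using h
    simp [dropIdx, swap_apply_of_ne_of_ne h_ne_last h_ne_p, h]

lemma snoc_dropIdx_comp_swap [DecidableEq α] (I : Fin (k + 1) → α) (p : Fin (k + 1)) (a : α) :
    (Fin.snoc (dropIdx p I) a : Fin (k + 1) → α) ∘ swap (Fin.last k) p =
      Function.update I p a := by
  ext i
  rcases eq_or_ne i p with rfl | h_ip
  · simp
  rw [Function.update_of_ne h_ip, Function.comp_apply]
  rcases eq_or_ne i (Fin.last k) with rfl | h_il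
  · rw [swap_apply_left, ← Fin.castSucc_castPred p h_ip.symm, Fin.snoc_castSucc]
    simp [dropIdx]
  · rw [swap_apply_of_ne_of_ne h_il h_ip, ← Fin.castSucc_castPred i h_il, Fin.snoc_castSucc]
    simp [dropIdx, swap_apply_of_ne_of_ne h_il h_ip]

end dropIdx

lemma lamOp_apply_of_isSym (g : Matrix (Fin 3) (Fin 3) ℝ) {k l : ℕ} {w : Tensor k l}
    (hw : IsSym w) (I J) :
    lamOp g w I J = (((k : ℝ) + 1) * ((l : ℝ) + 1))⁻¹ *
      ∑ p, ∑ q, g (I p) (J q) * w (dropIdx p I) (dropIdx q J) := by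
  set h : Tensor (k + 1) (l + 1) := fun I J =>
    g (I (Fin.last k)) (J (Fin.last l)) * w (I ∘ Fin.castSucc) (J ∘ Fin.castSucc) with h_def
  have h_inv_snd : ∀ I J (e : Perm (Fin l)), h I (J ∘ extendLast e) = h I J := by
    intro I J e
    simp only [h_def, Function.comp_assoc, comp_extendLast_comp_castSucc, extendLast_last,
      Function.comp_apply]
    rw [← Function.comp_assoc, hw.comp_right]
  have h_inv_fst : ∀ I J (e : Perm (Fin k)), symSnd h (I ∘ extendLast e) J = symSnd h I J := by
    intro I J e
    simp only [symSnd, h_def, Function.comp_assoc, comp_extendLast_comp_castSucc, extendLast_last,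
      Function.comp_apply]
    simp only [← Function.comp_assoc, hw.comp_left]
  have h_swap : ∀ p q, h (I ∘ swap (Fin.last k) p) (J ∘ swap (Fin.last l) q) =
      g (I p) (J q) * w (dropIdx p I) (dropIdx q J) := by
    simp [h_def, dropIdx, Function.comp_assoc]
  rw [lamOp, symFst_apply_of_invariant h_inv_fst]
  simp_rw [symSnd_apply_of_invariant h_inv_snd, h_swap, mul_sum, mul_inv, mul_assoc]

lemma IsSym.muOp (ginv : Matrix (Fin 3) (Fin 3) ℝ) {k l : ℕ} {w : Tensor (k + 1) (l + 1)}
    (hw : IsSym w) : IsSym (muOp ginv w) := by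
  intro I J σ τ
  simp only [_root_.muOp, ← snoc_comp_extendLast, hw.eq]

lemma muOp_dropIdx (ginv : Matrix (Fin 3) (Fin 3) ℝ) {k l : ℕ} {w : Tensor (k + 1) (l + 1)}
    (hw : IsSym w) (I : Fin (k + 1) → Fin 3) (J : Fin (l + 1) → Fin 3) (p q) :
    muOp ginv w (dropIdx p I) (dropIdx q J) =
      ∑ a, ∑ b, ginv a b * w (Function.update I p a) (Function.update J q b) := by
  simp only [muOp, ← snoc_dropIdx_comp_swap, hw.eq]

lemma lamOp_snoc_snoc (g : Matrix (Fin 3) (Fin 3) ℝ) {k l : ℕ} {w : Tensor (k + 1) (l + 1)}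
    (hw : IsSym w) (I : Fin (k + 1) → Fin 3) (J : Fin (l + 1) → Fin 3) (a b : Fin 3) :
    lamOp g w (Fin.snoc I a) (Fin.snoc J b) = (((k : ℝ) + 2) * ((l : ℝ) + 2))⁻¹ *
      ((∑ p, ∑ q, g (I p) (J q) * w (Function.update I p a) (Function.update J q b))
        + (∑ p, g (I p) b * w (Function.update I p a) J)
        + (∑ q, g a (J q) * w I (Function.update J q b))
        + g a b * w I J) := by
  rw [lamOp_apply_of_isSym g hw]
  simp only [Fin.sum_univ_castSucc, Fin.snoc_castSucc, Fin.snoc_last, dropIdx_castSucc_snoc,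
    dropIdx_last_snoc, sum_add_distrib]
  push_cast
  ring

section Contraction

variable {ι : Type*} [Fintype ι] [DecidableEq ι] {g : Matrix ι ι ℝ}

lemma sum_inv_mul_apply (hg : g.IsSymm) (hdet : IsUnit g.det) (a c : ι) :
    ∑ b, g⁻¹ a b * g c b = (1 : Matrix ι ι ℝ) a c := by
  rw [← nonsing_inv_mul g hdet, Matrix.mul_apply]
  simp_rw [hg.apply c]

lemma sum_sum_inv_mul_mul_left (hg : g.IsSymm) (hdet : IsUnit g.det) (c : ι) (F : ι → ℝ) :
    ∑ a, ∑ b, g⁻¹ a b * g c b * F a = F c := by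
  simp [← sum_mul, sum_inv_mul_apply hg hdet, Matrix.one_apply]

lemma sum_sum_inv_mul_mul_right (hg : g.IsSymm) (hdet : IsUnit g.det) (c : ι) (F : ι → ℝ) :
    ∑ a, ∑ b, g⁻¹ a b * g a c * F b = F c := by
  rw [sum_comm, ← sum_sum_inv_mul_mul_left hg hdet c F]
  simp_rw [hg.apply, hg.inv.apply]

lemma sum_sum_inv_mul_self (hg : g.IsSymm) (hdet : IsUnit g.det) :
    ∑ a, ∑ b, g⁻¹ a b * g a b = Fintype.card ι := by
  simp [sum_inv_mul_apply hg hdet]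

end Contraction

lemma muOp_lamOp_apply {g : Matrix (Fin 3) (Fin 3) ℝ} (hg : g.IsSymm) (hdet : IsUnit g.det)
    {k l : ℕ} {w : Tensor (k + 1) (l + 1)} (hw : IsSym w) (I J) :
    muOp g⁻¹ (lamOp g w) I J = (((k : ℝ) + 2) * ((l : ℝ) + 2))⁻¹ *
      (((k : ℝ) + 1) * ((l : ℝ) + 1) * lamOp g (muOp g⁻¹ w) I J
        + ((k : ℝ) + 1) * w I J + ((l : ℝ) + 1) * w I J + 3 * w I J) := by
  have h_both : ∑ a, ∑ b, g⁻¹ a b *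
      ∑ p, ∑ q, g (I p) (J q) * w (Function.update I p a) (Function.update J q b) =
      ((k : ℝ) + 1) * ((l : ℝ) + 1) * lamOp g (muOp g⁻¹ w) I J := by
    rw [lamOp_apply_of_isSym g (hw.muOp g⁻¹), ← mul_assoc, mul_inv_cancel₀ (by positivity),
      one_mul]
    simp_rw [muOp_dropIdx g⁻¹ hw, mul_sum]
    rw [sum_comm_cycle]
    refine sum_congr rfl fun p _ => ?_
    rw [sum_comm_cycle]
    exact sum_congr rfl fun q _ => sum_congr rfl fun a _ => sum_congr rfl fun b _ =>
      mul_left_comm _ _ _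
  have h_fst : ∑ a, ∑ b, g⁻¹ a b * ∑ p, g (I p) b * w (Function.update I p a) J =
      ((k : ℝ) + 1) * w I J := by
    simp_rw [mul_sum, ← mul_assoc]
    rw [sum_comm_cycle]
    simp [sum_sum_inv_mul_mul_left hg hdet]
  have h_snd : ∑ a, ∑ b, g⁻¹ a b * ∑ q, g a (J q) * w I (Function.update J q b) =
      ((l : ℝ) + 1) * w I J := by
    simp_rw [mul_sum, ← mul_assoc]
    rw [sum_comm_cycle]
    simp [sum_sum_inv_mul_mul_right hg hdet]
  have h_trace : ∑ a, ∑ b, g⁻¹ a b * (g a b * w I J) = 3 * w I J := by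
    simp_rw [← mul_assoc, ← sum_mul, sum_sum_inv_mul_self hg hdet, Fintype.card_fin]
    norm_num
  simp only [muOp, lamOp_snoc_snoc g hw]
  simp only [mul_left_comm (g⁻¹ _ _) (((k : ℝ) + 2) * ((l : ℝ) + 2))⁻¹, ← mul_sum]
  simp only [mul_add (g⁻¹ _ _), sum_add_distrib, h_both, h_fst, h_snd, h_trace]

/-- for tensors symmetric in the first `k = m+2` and last `ℓ = n+2` indices on a
3-dimensional inner product space, the commutator of the trace operator μ and the symmetrized
metric product λ satisfies `μλw = ((k+ℓ+1)/(kℓ)) w + ((k-1)(ℓ-1)/(kℓ)) λμw` for any tensor `w`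
symmetric in its first `k-1` and last `ℓ-1` indices. -/
theorem mu_lam_commutator (g : Matrix (Fin 3) (Fin 3) ℝ) (hg : g.PosDef)
    (m n : ℕ) (w : Tensor (m + 1) (n + 1)) (hw : IsSym w) :
    muOp g⁻¹ (lamOp g w) = fun I J =>
      ((((m : ℝ) + 2) + ((n : ℝ) + 2) + 1) / (((m : ℝ) + 2) * ((n : ℝ) + 2))) * w I J
      + (((((m : ℝ) + 2) - 1) * (((n : ℝ) + 2) - 1)) / (((m : ℝ) + 2) * ((n : ℝ) + 2)))
          * lamOp g (muOp g⁻¹ w) I J := by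
  have hg_symm : g.IsSymm := isHermitian_iff_isSymm.mp hg.isHermitian
  have hg_det : IsUnit g.det := (isUnit_iff_isUnit_det g).mp hg.isUnit
  funext I J
  rw [muOp_lamOp_apply hg_symm hg_det hw]
  field_simp
  ring
end
end

section
/- On a 3-dimensional inner product space, for any symmetric m-tensor v, the composition μλ applied to v equals ((m+3)/(m+1)) v, where λ is the symmetrized tensor product with the metric and μ is the trace operator pairing the last index of each symmetric group. -/
open Matrix BigOperators

noncomputable section

/-! For symmetric `v` the symmetrization in `λ v` collapses to an average over the slot that
carries the metric: `(λ v)_{K j} = (m+1)⁻¹ ∑ᵢ g_{Kᵢ j} v_{K without i}`, because the value of `v`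
only depends on which indices remain. Contracting with `g⁻¹`, the slot `i = m+1` traced by `μ`
contributes `g^{ab} g_{ab} = 3`, while each of the other `m` slots contributes a Kronecker delta
that moves `Iᵢ` into the traced slot, after which symmetry of `v` returns `v_I`. Hence
`μ λ v = (m+1)⁻¹ (3 + m) v`. -/

open Equiv Function Finset

theorem Fin.sum_perm_apply_eq_factorial_smul {M : Type*} [AddCommMonoid M] {n : ℕ}
    (F : Fin (n + 1) → M) (k : Fin (n + 1)) :
    ∑ σ : Perm (Fin (n + 1)), F (σ k) = n.factorial • ∑ i, F i := by
  rw [← Equiv.sum_comp (Equiv.mulRight (swap 0 k)), ← Equiv.sum_comp Perm.decomposeFin.symm,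
    Fintype.sum_prod_type_right]
  simp [Perm.decomposeFin_symm_apply_zero, Fintype.card_perm]

theorem Equiv.Perm.range_comp_succAbove {n : ℕ} (σ : Perm (Fin (n + 1))) (k : Fin (n + 1)) :
    Set.range (σ ∘ k.succAbove) = Set.range (σ k).succAbove := by
  rw [Set.range_comp, Fin.range_succAbove, Fin.range_succAbove, Set.image_compl_eq σ.bijective,
    Set.image_singleton]

def IsSymFst {k l : ℕ} (f : Tensor k l) : Prop :=
  ∀ (I : Fin k → Fin 3) (J : Fin l → Fin 3) (σ : Perm (Fin k)), f (I ∘ σ) J = f I J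

theorem IsSym.isSymFst {k l : ℕ} {f : Tensor k l} (hf : IsSym f) : IsSymFst f :=
  fun I J σ => hf I J σ 1

theorem IsSymFst.apply_comp_eq_of_range_eq {k l n : ℕ} {f : Tensor k l} (hf : IsSymFst f)
    (I : Fin n → Fin 3) (J : Fin l → Fin 3) {e e' : Fin k → Fin n} (he : Injective e)
    (he' : Injective e') (h : Set.range e = Set.range e') : f (I ∘ e) J = f (I ∘ e') J := by
  let π : Perm (Fin k) :=
    ((ofInjective e he).trans (setCongr h)).trans (ofInjective e' he').symm
  have hπ : e' ∘ π = e := funext fun i => by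
    simp [π, apply_ofInjective_symm]
  rw [← hπ, ← comp_assoc, hf]

theorem IsSymFst.apply_comp_succAbove_eq {k l : ℕ} {f : Tensor k l} (hf : IsSymFst f)
    (K : Fin (k + 1) → Fin 3) (J : Fin l → Fin 3) {i j : Fin (k + 1)} (hK : K i = K j) :
    f (K ∘ i.succAbove) J = f (K ∘ j.succAbove) J := by
  have hKswap : K ∘ swap i j = K := by
    funext x
    rcases eq_or_ne x i with rfl | hxi
    · simp [hK]
    rcases eq_or_ne x j with rfl | hxj
    · simp [hK]
    simp [swap_apply_of_ne_of_ne hxi hxj]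
  calc f (K ∘ i.succAbove) J = f (K ∘ (swap i j ∘ i.succAbove)) J := by
        rw [← comp_assoc, hKswap]
    _ = f (K ∘ j.succAbove) J :=
        hf.apply_comp_eq_of_range_eq K J ((swap i j).injective.comp Fin.succAbove_right_injective)
          Fin.succAbove_right_injective (by rw [Perm.range_comp_succAbove, swap_apply_left])

theorem IsSymFst.symFst_mul_apply {k l : ℕ} {w : Tensor k l} (hw : IsSymFst w)
    (c : Fin 3 → (Fin l → Fin 3) → ℝ) (I : Fin (k + 1) → Fin 3) (J : Fin l → Fin 3) :
    symFst (fun I J => c (I (Fin.last k)) J * w (I ∘ Fin.castSucc) J) I J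
      = ((k : ℝ) + 1)⁻¹ * ∑ i, c (I i) J * w (I ∘ i.succAbove) J := by
  have hterm : ∀ σ : Perm (Fin (k + 1)), w (I ∘ σ ∘ Fin.castSucc) J
      = w (I ∘ (σ (Fin.last k)).succAbove) J := fun σ =>
    hw.apply_comp_eq_of_range_eq I J (σ.injective.comp (Fin.castSucc_injective k))
      Fin.succAbove_right_injective (by rw [← Fin.succAbove_last, Perm.range_comp_succAbove])
  simp only [symFst, Function.comp_apply, Function.comp_assoc, hterm]
  rw [Fin.sum_perm_apply_eq_factorial_smul (fun i => c (I i) J * w (I ∘ i.succAbove) J),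
    nsmul_eq_mul, ← mul_assoc, Nat.factorial_succ]
  push_cast
  field_simp

theorem symSnd_eq_self {k : ℕ} (f : Tensor k 1) : symSnd f = f := by
  ext I J
  simp [symSnd, Subsingleton.elim _ (1 : Perm (Fin 1))]

theorem IsSymFst.lamOp_apply {k : ℕ} {v : Tensor k 0} (hv : IsSymFst v)
    (g : Matrix (Fin 3) (Fin 3) ℝ) (I : Fin (k + 1) → Fin 3) (J : Fin 1 → Fin 3) :
    lamOp g v I J
      = ((k : ℝ) + 1)⁻¹ *
        ∑ i, g (I i) (J (Fin.last 0)) * v (I ∘ i.succAbove) (J ∘ Fin.castSucc) := by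
  have hw : IsSymFst fun I (J : Fin 1 → Fin 3) => v I (J ∘ Fin.castSucc) := fun I J σ => hv I _ σ
  rw [lamOp, symSnd_eq_self]
  exact hw.symFst_mul_apply (fun a J => g a (J (Fin.last 0))) I J

theorem Matrix.sum_inv_mul_apply_of_isSymm {n R : Type*} [Fintype n] [DecidableEq n] [CommRing R]
    {g : Matrix n n R} (hg : g.IsSymm) (hdet : IsUnit g.det) (a x : n) :
    ∑ b, g⁻¹ a b * g x b = if a = x then 1 else 0 := by
  rw [← Matrix.one_apply, ← Matrix.nonsing_inv_mul g hdet, Matrix.mul_apply]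
  exact sum_congr rfl fun b _ => by rw [hg.apply]

theorem IsSymFst.sum_delta_snoc_comp_succAbove {k l : ℕ} {v : Tensor k l} (hv : IsSymFst v)
    (I : Fin k → Fin 3) (J : Fin l → Fin 3) (i : Fin (k + 1)) :
    ∑ a, (if a = (Fin.snoc I a : Fin (k + 1) → Fin 3) i then 1 else 0)
        * v (Fin.snoc I a ∘ i.succAbove) J
      = (if i = Fin.last k then 3 else 1) * v I J := by
  induction i using Fin.lastCases with
  | last => simp
  | cast j =>
    simp only [Fin.snoc_castSucc, ite_mul, one_mul, zero_mul, sum_ite_eq',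
      mem_univ, if_true, Fin.castSucc_ne_last, if_false]
    rw [hv.apply_comp_succAbove_eq _ J (j := Fin.last k) (by simp), Fin.succAbove_last,
      Fin.snoc_comp_castSucc]

/-- on a 3-dimensional inner product space, for any symmetric `m`-tensor `v`,
`μ(λ v) = ((m+3)/(m+1)) v`, where λ is the symmetrized tensor product with the metric and μ
is the trace operator pairing the last index of each symmetric group. -/
theorem mu_lam_symmetric_tensor (g : Matrix (Fin 3) (Fin 3) ℝ) (hg : g.PosDef)
    (m : ℕ) (v : Tensor m 0) (hv : IsSym v) :
    muOp g⁻¹ (lamOp g v) = fun I J => (((m : ℝ) + 3) / ((m : ℝ) + 1)) * v I J := by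
  have hsymm : g.IsSymm := Matrix.isHermitian_iff_isSymm.mp hg.isHermitian
  have hdet : IsUnit g.det := isUnit_iff_ne_zero.mpr hg.det_pos.ne'
  funext I J
  calc muOp g⁻¹ (lamOp g v) I J
      = ((m : ℝ) + 1)⁻¹ * ∑ i, ∑ a, (∑ b, g⁻¹ a b * g ((Fin.snoc I a : Fin (m + 1) → Fin 3) i) b)
          * v (Fin.snoc I a ∘ i.succAbove) J := by
        simp only [muOp, hv.isSymFst.lamOp_apply, Fin.snoc_last, Fin.snoc_comp_castSucc, mul_sum,
          sum_mul]
        conv_rhs => rw [sum_comm]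
        refine sum_congr rfl fun a _ => ?_
        rw [sum_comm]
        exact sum_congr rfl fun _ _ => sum_congr rfl fun _ _ => by ring
    _ = ((m : ℝ) + 1)⁻¹ * ∑ i : Fin (m + 1), (if i = Fin.last m then 3 else 1) * v I J := by
        simp only [Matrix.sum_inv_mul_apply_of_isSymm hsymm hdet,
          hv.isSymFst.sum_delta_snoc_comp_succAbove]
    _ = (((m : ℝ) + 3) / ((m : ℝ) + 1)) * v I J := by
        rw [Fin.sum_univ_castSucc]
        simp only [Fin.castSucc_ne_last, if_true, if_false, one_mul, sum_const, card_univ,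
          Fintype.card_fin, nsmul_eq_mul]
        ring
end
end

section
/- The principal symbol of the operator Δ^B = δ^B d^B acting on trace-free 2+1 tensors (symmetric in the first two indices, trace-free) satisfies the ellipticity estimate ⟨−σ(Δ^B)(ξ) u, u⟩ ≥ (1/10)|ξ|²_g ⟨u, u⟩ for all u, where −σ(Δ^B)u has components (1/2)(u_{i1 i2 j1}|ξ|²_g + u_{i1 i2 h} ξ^h ξ_{j1}) − (1/10)(u_{r i2 j1} ξ^r ξ_{i1} + u_{r i1 j1} ξ^r ξ_{i2} + g_{i1 j1} ξ^r ξ^h u_{r i2 h} + g_{i2 j1} ξ^r ξ^h u_{r i1 h}). -/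
/-!
Write `G = g⁻¹`, `x = Gξ` (the vector `ξ^♯`) and `|·|` for the `G`-norms. Pairing `−σ(ξ)u` with
`u`, the terms built from `g_{i₁j₁}` and `g_{i₂j₁}` vanish because `u` is symmetric and trace-free,
and what remains is `½|ξ|²|u|² + ½|u(·,·,x)|² − ⅕|u(x,·,·)|²`. By Cauchy–Schwarz,
`|u(x,·,·)|² ≤ |ξ|²|u|²`, so the pairing is at least `(3/10)|ξ|²|u|²`.
-/

open Matrix
open scoped Kronecker

section

variable {ι : Type*} [Fintype ι]

def tensorVec (u : ι → ι → ι → ℝ) : (ι × ι) × ι → ℝ := fun p => u p.1.1 p.1.2 p.2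

/-- Flattening a 3-tensor to a vector on `(ι × ι) × ι` turns the inner product contracted with
`A, B, C` into a Kronecker quadratic form: positivity is `PosSemidef.kronecker`, and moving a
contraction to the other argument is matrix algebra. -/
def tensorInner (A B C : Matrix ι ι ℝ) (v w : ι → ι → ι → ℝ) : ℝ :=
  tensorVec v ⬝ᵥ (A ⊗ₖ B ⊗ₖ C) *ᵥ tensorVec w

theorem tensorInner_eq_sum (A B C : Matrix ι ι ℝ) (v w : ι → ι → ι → ℝ) :
    tensorInner A B C v w = ∑ i, ∑ j, ∑ k, ∑ i', ∑ j', ∑ k',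
      A i i' * B j j' * C k k' * v i j k * w i' j' k' := by
  simp only [tensorInner, tensorVec, dotProduct, mulVec, Fintype.sum_prod_type, kronecker_apply,
    Finset.mul_sum]
  congr! 6 with i j k i' j' k'
  ring

theorem tensorInner_self_nonneg {A B C : Matrix ι ι ℝ} (hA : A.PosSemidef) (hB : B.PosSemidef)
    (hC : C.PosSemidef) (u : ι → ι → ι → ℝ) : 0 ≤ tensorInner A B C u u :=
  ((hA.kronecker hB).kronecker hC).dotProduct_mulVec_nonneg (tensorVec u)

theorem tensorInner_add_left (A B C : Matrix ι ι ℝ) (v v' w : ι → ι → ι → ℝ) :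
    tensorInner A B C (v + v') w = tensorInner A B C v w + tensorInner A B C v' w :=
  add_dotProduct _ _ _

theorem tensorInner_sub_left (A B C : Matrix ι ι ℝ) (v v' w : ι → ι → ι → ℝ) :
    tensorInner A B C (v - v') w = tensorInner A B C v w - tensorInner A B C v' w :=
  sub_dotProduct _ _ _

theorem tensorInner_smul_left (A B C : Matrix ι ι ℝ) (c : ℝ) (v w : ι → ι → ι → ℝ) :
    tensorInner A B C (c • v) w = c * tensorInner A B C v w :=
  smul_dotProduct c (tensorVec v) _

theorem tensorInner_add_matrix (A A' B C : Matrix ι ι ℝ) (v w : ι → ι → ι → ℝ) :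
    tensorInner (A + A') B C v w = tensorInner A B C v w + tensorInner A' B C v w := by
  simp only [tensorInner, add_kronecker, add_mulVec, dotProduct_add]

theorem tensorInner_smul_matrix (c : ℝ) (A B C : Matrix ι ι ℝ) (v w : ι → ι → ι → ℝ) :
    tensorInner (c • A) B C v w = c * tensorInner A B C v w := by
  simp only [tensorInner, smul_kronecker, smul_mulVec, dotProduct_smul, smul_eq_mul]

theorem tensorInner_of_tensorVec_eq_mulVec {A B C : Matrix ι ι ℝ} {v u : ι → ι → ι → ℝ}
    {N : Matrix ((ι × ι) × ι) ((ι × ι) × ι) ℝ} (h : tensorVec v = N *ᵥ tensorVec u)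
    (w : ι → ι → ι → ℝ) :
    tensorInner A B C v w = tensorVec u ⬝ᵥ (Nᵀ * (A ⊗ₖ B ⊗ₖ C)) *ᵥ tensorVec w := by
  rw [tensorInner, h, dotProduct_comm, dotProduct_mulVec, ← mulVec_transpose, dotProduct_comm,
    ← mulVec_mulVec]

def mulFirst (K : Matrix ι ι ℝ) (u : ι → ι → ι → ℝ) : ι → ι → ι → ℝ :=
  fun a b c => ∑ r, K a r * u r b c

def mulThird (K : Matrix ι ι ℝ) (u : ι → ι → ι → ℝ) : ι → ι → ι → ℝ :=
  fun a b c => ∑ r, K c r * u a b r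

def swap12 (u : ι → ι → ι → ℝ) : ι → ι → ι → ℝ := fun a b c => u b a c

theorem tensorInner_swap12 (A B C : Matrix ι ι ℝ) (v w : ι → ι → ι → ℝ) :
    tensorInner A B C (swap12 v) (swap12 w) = tensorInner B A C v w := by
  rw [tensorInner_eq_sum, tensorInner_eq_sum, Finset.sum_comm]
  refine Finset.sum_congr rfl fun b _ => Finset.sum_congr rfl fun a _ =>
    Finset.sum_congr rfl fun c _ => ?_
  rw [Finset.sum_comm]
  refine Finset.sum_congr rfl fun b' _ => Finset.sum_congr rfl fun a' _ =>
    Finset.sum_congr rfl fun c' _ => ?_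
  simp only [swap12]
  ring

theorem tensorInner_outer_left (A B C : Matrix ι ι ℝ) (f : ι → ℝ) (h : Matrix ι ι ℝ)
    (w : ι → ι → ι → ℝ) :
    tensorInner A B C (fun a b c => f a * h b c) w =
      ∑ a, (f ᵥ* A) a * ∑ b, ∑ c, (Bᵀ * h * C) b c * w a b c := by
  rw [tensorInner, dotProduct_mulVec]
  simp only [dotProduct, vecMul, tensorVec, Fintype.sum_prod_type, kronecker_apply, mul_apply,
    transpose_apply, Finset.mul_sum, Finset.sum_mul]
  refine Finset.sum_congr rfl fun a' _ => Finset.sum_congr rfl fun b' _ =>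
    Finset.sum_congr rfl fun c' _ => ?_
  conv_rhs => rw [Finset.sum_comm]; enter [2, b]; rw [Finset.sum_comm]
  rw [Finset.sum_comm]
  refine Finset.sum_congr rfl fun a _ => Finset.sum_congr rfl fun b _ =>
    Finset.sum_congr rfl fun c _ => ?_
  ring

variable [DecidableEq ι]

theorem tensorVec_mulFirst (K : Matrix ι ι ℝ) (u : ι → ι → ι → ℝ) :
    tensorVec (mulFirst K u) = (K ⊗ₖ 1 ⊗ₖ 1) *ᵥ tensorVec u := by
  ext ⟨⟨a, b⟩, c⟩
  simp [tensorVec, mulFirst, mulVec, dotProduct, Fintype.sum_prod_type, one_apply]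

theorem tensorVec_mulThird (K : Matrix ι ι ℝ) (u : ι → ι → ι → ℝ) :
    tensorVec (mulThird K u) = (1 ⊗ₖ 1 ⊗ₖ K) *ᵥ tensorVec u := by
  ext ⟨⟨a, b⟩, c⟩
  simp [tensorVec, mulThird, mulVec, dotProduct, Fintype.sum_prod_type, one_apply]

theorem tensorInner_mulFirst (A B C K : Matrix ι ι ℝ) (u w : ι → ι → ι → ℝ) :
    tensorInner A B C (mulFirst K u) w = tensorInner (Kᵀ * A) B C u w := by
  rw [tensorInner_of_tensorVec_eq_mulVec (tensorVec_mulFirst K u), tensorInner,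
    ← kroneckerMap_transpose, ← kroneckerMap_transpose, ← mul_kronecker_mul, ← mul_kronecker_mul,
    transpose_one, one_mul, one_mul]

theorem tensorInner_mulThird (A B C K : Matrix ι ι ℝ) (u w : ι → ι → ι → ℝ) :
    tensorInner A B C (mulThird K u) w = tensorInner A B (Kᵀ * C) u w := by
  rw [tensorInner_of_tensorVec_eq_mulVec (tensorVec_mulThird K u), tensorInner,
    ← kroneckerMap_transpose, ← kroneckerMap_transpose, ← mul_kronecker_mul, ← mul_kronecker_mul,
    transpose_one, one_mul, one_mul]

theorem posSemidef_smul_sub_vecMulVec {G : Matrix ι ι ℝ} (hG : G.PosSemidef) (ξ : ι → ℝ) :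
    ((ξ ⬝ᵥ G *ᵥ ξ) • G - vecMulVec (G *ᵥ ξ) (G *ᵥ ξ)).PosSemidef := by
  set x := G *ᵥ ξ
  have hx : ξ ᵥ* G = x := by
    rw [← mulVec_transpose, ← conjTranspose_eq_transpose_of_trivial, hG.1]
  refine .of_dotProduct_mulVec_nonneg ?_ fun z => ?_
  · exact (hG.1.smul (IsSelfAdjoint.all _)).sub
      (by simpa using (posSemidef_vecMulVec_self_star x).1)
  · have cs := LinearMap.BilinForm.apply_mul_apply_le_of_forall_zero_le (toLinearMap₂' ℝ G)
      (fun z => by simpa [toLinearMap₂'_apply'] using hG.dotProduct_mulVec_nonneg z) ξ z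
    simp only [toLinearMap₂'_apply', dotProduct_mulVec ξ, hx] at cs
    simp only [star_trivial, sub_mulVec, smul_mulVec, vecMulVec_mulVec, dotProduct_sub,
      dotProduct_smul, smul_eq_mul]
    rw [dotProduct_comm x ξ, dotProduct_comm z x] at cs
    rw [op_smul_eq_mul, dotProduct_comm z x]
    linarith

theorem tensorInner_vecMulVec_le {G B C : Matrix ι ι ℝ} (hG : G.PosSemidef) (hB : B.PosSemidef)
    (hC : C.PosSemidef) (ξ : ι → ℝ) (u : ι → ι → ι → ℝ) :
    tensorInner (vecMulVec (G *ᵥ ξ) (G *ᵥ ξ)) B C u u ≤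
      (ξ ⬝ᵥ G *ᵥ ξ) * tensorInner G B C u u := by
  have h := tensorInner_self_nonneg (posSemidef_smul_sub_vecMulVec hG ξ) hB hC u
  rw [← tensorInner_smul_matrix,
    ← sub_add_cancel ((ξ ⬝ᵥ G *ᵥ ξ) • G) (vecMulVec (G *ᵥ ξ) (G *ᵥ ξ)), tensorInner_add_matrix]
  linarith

/-- `−σ(Δ^B)(ξ) u`, with `x = ξ^♯`. -/
noncomputable def negPrincipalSymbol (g : Matrix ι ι ℝ) (ξ : ι → ℝ) (u : ι → ι → ι → ℝ) :
    ι → ι → ι → ℝ :=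
  let x := g⁻¹ *ᵥ ξ
  let K := vecMulVec ξ x
  let F : ι → ι → ι → ℝ := fun a b c => (∑ r, ∑ h, x r * x h * u r a h) * g b c
  (1 / 2 : ℝ) • ((ξ ⬝ᵥ x) • u + mulThird K u) -
    (1 / 10 : ℝ) • (mulFirst K u + swap12 (mulFirst K u) + swap12 F + F)

theorem tensorInner_negPrincipalSymbol {g : Matrix ι ι ℝ} (hsymm : g.IsSymm)
    (hdet : IsUnit g.det) (ξ : ι → ℝ) {u : ι → ι → ι → ℝ}
    (husym : ∀ i1 i2 j1, u i1 i2 j1 = u i2 i1 j1)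
    (htf : ∀ i1, ∑ i2, ∑ j1, g⁻¹ i2 j1 * u i1 i2 j1 = 0) :
    tensorInner g⁻¹ g⁻¹ g⁻¹ (negPrincipalSymbol g ξ u) u =
      1 / 2 * (ξ ⬝ᵥ g⁻¹ *ᵥ ξ) * tensorInner g⁻¹ g⁻¹ g⁻¹ u u
        + 1 / 2 * tensorInner g⁻¹ g⁻¹ (vecMulVec (g⁻¹ *ᵥ ξ) (g⁻¹ *ᵥ ξ)) u u
        - 1 / 5 * tensorInner (vecMulVec (g⁻¹ *ᵥ ξ) (g⁻¹ *ᵥ ξ)) g⁻¹ g⁻¹ u u := by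
  simp only [negPrincipalSymbol, tensorInner_sub_left, tensorInner_add_left, tensorInner_smul_left]
  set G := g⁻¹
  set x := G *ᵥ ξ
  set K := vecMulVec ξ x
  set F : ι → ι → ι → ℝ := fun a b c => (∑ r, ∑ h, x r * x h * u r a h) * g b c
  have hGT : Gᵀ = G := by rw [transpose_nonsing_inv, hsymm.eq]
  have hK : Kᵀ * G = vecMulVec x x := by
    rw [transpose_vecMulVec, vecMulVec_mul, ← mulVec_transpose, hGT]
  have hu : swap12 u = u := funext fun a => funext fun b => funext fun c => husym b a c
  have hF : tensorInner G G G F u = 0 := by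
    have hGgG : Gᵀ * g * G = G := by rw [hGT, nonsing_inv_mul g hdet, one_mul]
    simp only [F, tensorInner_outer_left, hGgG, htf, mul_zero, Finset.sum_const_zero]
  have hswap (v : ι → ι → ι → ℝ) : tensorInner G G G (swap12 v) u = tensorInner G G G v u := by
    rw [← tensorInner_swap12 G G G v u, hu]
  rw [hswap, hswap, hF, tensorInner_mulThird, tensorInner_mulFirst, hK]
  ring

end

theorem elliptic_estimate_principal_symbol_general (g : Matrix (Fin 3) (Fin 3) ℝ) (hg : g.PosDef)
    (ξ : Fin 3 → ℝ)
    (u : Fin 3 → Fin 3 → Fin 3 → ℝ)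
    (husym : ∀ i1 i2 j1, u i1 i2 j1 = u i2 i1 j1)
    (htf : ∀ i1, ∑ i2, ∑ j1, g⁻¹ i2 j1 * u i1 i2 j1 = 0) :
    let xiUp : Fin 3 → ℝ := fun i => ∑ j, g⁻¹ i j * ξ j
    let nsq : ℝ := ∑ i, ξ i * xiUp i
    let negσ : Fin 3 → Fin 3 → Fin 3 → ℝ := fun i1 i2 j1 =>
      (1 / 2) * (u i1 i2 j1 * nsq + (∑ h, u i1 i2 h * xiUp h) * ξ j1)
      - (1 / 10) * ((∑ r, u r i2 j1 * xiUp r) * ξ i1 + (∑ r, u r i1 j1 * xiUp r) * ξ i2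
          + g i1 j1 * (∑ r, ∑ h, xiUp r * xiUp h * u r i2 h)
          + g i2 j1 * (∑ r, ∑ h, xiUp r * xiUp h * u r i1 h))
    let ip : (Fin 3 → Fin 3 → Fin 3 → ℝ) → (Fin 3 → Fin 3 → Fin 3 → ℝ) → ℝ := fun v w =>
      ∑ i1, ∑ i2, ∑ j1, ∑ i1', ∑ i2', ∑ j1',
        g⁻¹ i1 i1' * g⁻¹ i2 i2' * g⁻¹ j1 j1' * v i1 i2 j1 * w i1' i2' j1'
    ip negσ u ≥ (1 / 10) * nsq * ip u u := by
  intro xiUp nsq negσ ip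
  have hip (v w) : ip v w = tensorInner g⁻¹ g⁻¹ g⁻¹ v w := (tensorInner_eq_sum _ _ _ v w).symm
  have hnsq : nsq = ξ ⬝ᵥ g⁻¹ *ᵥ ξ := rfl
  have hx : xiUp = g⁻¹ *ᵥ ξ := rfl
  have hσ : negσ = negPrincipalSymbol g ξ u := by
    funext a b c
    simp only [negσ, negPrincipalSymbol, mulFirst, mulThird, swap12, Pi.sub_apply, Pi.add_apply,
      Pi.smul_apply, smul_eq_mul, vecMulVec_apply, hnsq, hx, Finset.sum_mul, Finset.mul_sum]
    simp only [mul_comm, mul_left_comm]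
  have hG : g⁻¹.PosSemidef := hg.inv.posSemidef
  have hsymm : g.IsSymm := by simpa using hg.isHermitian
  have hu := tensorInner_self_nonneg hG hG hG u
  have hv := tensorInner_self_nonneg hG hG (posSemidef_vecMulVec_self_star (g⁻¹ *ᵥ ξ)) u
  have hw := tensorInner_vecMulVec_le hG hG hG ξ u
  have hξ : 0 ≤ ξ ⬝ᵥ g⁻¹ *ᵥ ξ := by simpa using hG.dotProduct_mulVec_nonneg ξ
  rw [hip, hip, hσ, tensorInner_negPrincipalSymbol hsymm hg.det_pos.ne'.isUnit ξ husym htf, hnsq]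
  simp only [star_trivial] at hv
  linarith [mul_nonneg hξ hu]

/-- the principal symbol of `Δ^B = δ^B d^B` acting on trace-free 2+1 tensors
(symmetric in the first two indices, trace-free) satisfies the ellipticity estimate
`⟨−σ(Δ^B)(ξ) u, u⟩ ≥ (1/10)|ξ|²_g ⟨u, u⟩`, where `−σ(Δ^B)u` has the stated components. -/
theorem elliptic_estimate_principal_symbol (g : Matrix (Fin 3) (Fin 3) ℝ) (hg : g.PosDef)
    (ξ : Fin 3 → ℝ) (hξ : ξ ≠ 0)
    (u : Fin 3 → Fin 3 → Fin 3 → ℝ)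
    (husym : ∀ i1 i2 j1, u i1 i2 j1 = u i2 i1 j1)
    (htf : ∀ i1, ∑ i2, ∑ j1, g⁻¹ i2 j1 * u i1 i2 j1 = 0) :
    let xiUp : Fin 3 → ℝ := fun i => ∑ j, g⁻¹ i j * ξ j
    let nsq : ℝ := ∑ i, ξ i * xiUp i
    let negσ : Fin 3 → Fin 3 → Fin 3 → ℝ := fun i1 i2 j1 =>
      (1 / 2) * (u i1 i2 j1 * nsq + (∑ h, u i1 i2 h * xiUp h) * ξ j1)
      - (1 / 10) * ((∑ r, u r i2 j1 * xiUp r) * ξ i1 + (∑ r, u r i1 j1 * xiUp r) * ξ i2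
          + g i1 j1 * (∑ r, ∑ h, xiUp r * xiUp h * u r i2 h)
          + g i2 j1 * (∑ r, ∑ h, xiUp r * xiUp h * u r i1 h))
    let ip : (Fin 3 → Fin 3 → Fin 3 → ℝ) → (Fin 3 → Fin 3 → Fin 3 → ℝ) → ℝ := fun v w =>
      ∑ i1, ∑ i2, ∑ j1, ∑ i1', ∑ i2', ∑ j1',
        g⁻¹ i1 i1' * g⁻¹ i2 i2' * g⁻¹ j1 j1' * v i1 i2 j1 * w i1' i2' j1'
    ip negσ u ≥ (1 / 10) * nsq * ip u u :=
  elliptic_estimate_principal_symbol_general g hg ξ u husym htf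
end

section
/- Decompose each of the three nonnegative quadratic forms: for any trace-free tensor u (symmetric in first two indices) and ξ ≠ 0, the operators p₁(ξ)u = u_{i1 i2 h} ξ^h ξ_{j1}, p₂(ξ)u = |ξ|²_g u_{i1 i2 j1} − u_{i1 i2 h} ξ^h ξ_{j1}, p₃(ξ)u = |ξ|²_g u_{i1 i2 j1} − g_{i2 j1} ξ^r ξ^h u_{r i1 h} are all positive semidefinite: ⟨p_α(ξ)u, u⟩ ≥ 0 for α = 1, 2, 3. -/
/-!
The inner product on covariant 3-tensors is the Kronecker cube of the positive semidefinite
metric `g⁻¹`, so it is a positive semidefinite symmetric bilinear form. Write `ξ^♯ = g⁻¹ ξ`,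
`|ξ|² = ⟨ξ, ξ^♯⟩` and `x = p₁(ξ)u = (u · ξ^♯) ⊗ ξ`. Pairing a tensor with `M ⊗ ξ` only sees its
contraction with `ξ^♯`, and that contraction of `x` is `|ξ|² (u · ξ^♯)`, whence
`⟨x, x⟩ = |ξ|² ⟨x, u⟩`. Cauchy–Schwarz then gives `0 ≤ ⟨x, u⟩ ≤ |ξ|² ⟨u, u⟩`, which are the
claims for `p₁` and `p₂ = |ξ|² u - p₁`. For `p₃`, pairing `g_{i2 j1} c_{i1}` with `u` produces the
trace `g^{i2 j1} u_{i1 i2 j1}`, which vanishes, so `⟨p₃ u, u⟩ = |ξ|² ⟨u, u⟩`.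
-/

open Matrix
open scoped Kronecker

theorem LinearMap.BilinForm.apply_nonneg_and_le_of_apply_self_eq {R M : Type*} [Field R]
    [LinearOrder R] [IsStrictOrderedRing R] [AddCommGroup M] [Module R M]
    (B : LinearMap.BilinForm R M) (hs : ∀ x, 0 ≤ B x x) (hB : B.IsSymm) {x y : M} {c : R}
    (hc : 0 ≤ c) (hx : B x x = c * B x y) : 0 ≤ B x y ∧ B x y ≤ c * B y y := by
  have hcs := B.apply_sq_le_of_symm hs (LinearMap.BilinForm.isSymm_iff.mp hB) x y
  have hxx := hs x
  rw [hx] at hcs hxx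
  have hxy : 0 ≤ B x y := by
    rcases hc.eq_or_lt with rfl | hc
    · nlinarith
    · exact nonneg_of_mul_nonneg_right hxx hc
  refine ⟨hxy, ?_⟩
  rcases hxy.eq_or_lt with h | h
  · rw [← h]
    exact mul_nonneg hc (hs y)
  · nlinarith

namespace Tensor3

variable {ι : Type*} [Fintype ι]

def flatten : (ι → ι → ι → ℝ) →ₗ[ℝ] ((ι × ι) × ι → ℝ) where
  toFun v x := v x.1.1 x.1.2 x.2
  map_add' _ _ := rfl
  map_smul' _ _ := rfl

def inner (G : Matrix ι ι ℝ) : LinearMap.BilinForm ℝ (ι → ι → ι → ℝ) :=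
  (dotProductBilin ℝ ℝ).compl₁₂ flatten ((G ⊗ₖ G ⊗ₖ G).mulVecLin ∘ₗ flatten)

def contractLast (u : ι → ι → ι → ℝ) (x : ι → ℝ) : Matrix ι ι ℝ :=
  fun i j => ∑ h, u i j h * x h

def outerLast (M : Matrix ι ι ℝ) (ξ : ι → ℝ) : ι → ι → ι → ℝ :=
  fun i j k => M i j * ξ k

variable {G : Matrix ι ι ℝ}

theorem inner_eq_dotProduct (G : Matrix ι ι ℝ) (v w : ι → ι → ι → ℝ) :
    inner G v w = flatten v ⬝ᵥ (G ⊗ₖ G ⊗ₖ G) *ᵥ flatten w :=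
  rfl

theorem inner_apply (G : Matrix ι ι ℝ) (v w : ι → ι → ι → ℝ) :
    inner G v w = ∑ i1, ∑ i2, ∑ j1, ∑ i1', ∑ i2', ∑ j1',
      G i1 i1' * G i2 i2' * G j1 j1' * v i1 i2 j1 * w i1' i2' j1' := by
  simp only [inner_eq_dotProduct, dotProduct, mulVec, Fintype.sum_prod_type, kroneckerMap_apply,
    Finset.mul_sum, flatten, LinearMap.coe_mk, AddHom.coe_mk]
  simp only [mul_comm, mul_left_comm]

theorem inner_self_nonneg (hG : G.PosSemidef) (v : ι → ι → ι → ℝ) : 0 ≤ inner G v v := by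
  rw [inner_eq_dotProduct]
  simpa using ((hG.kronecker hG).kronecker hG).dotProduct_mulVec_nonneg (flatten v)

theorem inner_isSymm (hG : G.IsSymm) : (inner G).IsSymm := by
  refine ⟨fun v w => ?_⟩
  have hK : (G ⊗ₖ G ⊗ₖ G)ᵀ = G ⊗ₖ G ⊗ₖ G := by
    rw [← kroneckerMap_transpose, ← kroneckerMap_transpose, hG.eq]
  rw [inner_eq_dotProduct, inner_eq_dotProduct, dotProduct_mulVec, ← mulVec_transpose, hK,
    dotProduct_comm]

theorem inner_outerLast_left (hG : G.IsSymm) (M : Matrix ι ι ℝ) (ξ : ι → ℝ)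
    (w : ι → ι → ι → ℝ) :
    inner G (outerLast M ξ) w =
      ∑ i, ∑ j, ∑ i', ∑ j', G i i' * G j j' * M i j * contractLast w (G *ᵥ ξ) i' j' := by
  rw [inner_apply]
  refine Finset.sum_congr rfl fun i _ => Finset.sum_congr rfl fun j _ => ?_
  rw [Finset.sum_comm]
  refine Finset.sum_congr rfl fun i' _ => ?_
  rw [Finset.sum_comm]
  refine Finset.sum_congr rfl fun j' _ => ?_
  rw [Finset.sum_comm]
  simp only [contractLast, outerLast, mulVec, dotProduct, Finset.mul_sum]
  refine Finset.sum_congr rfl fun h _ => Finset.sum_congr rfl fun l _ => ?_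
  rw [hG.apply h l]
  ring

theorem contractLast_outerLast (M : Matrix ι ι ℝ) (ξ x : ι → ℝ) :
    contractLast (outerLast M ξ) x = (ξ ⬝ᵥ x) • M := by
  ext i j
  simp only [contractLast, outerLast, dotProduct, Matrix.smul_apply, smul_eq_mul, Finset.sum_mul]
  exact Finset.sum_congr rfl fun h _ => by ring

theorem inner_projection_self (hG : G.IsSymm) (u : ι → ι → ι → ℝ) (ξ : ι → ℝ) :
    let x := outerLast (contractLast u (G *ᵥ ξ)) ξ
    inner G x x = (ξ ⬝ᵥ G *ᵥ ξ) * inner G x u := by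
  intro x
  simp only [x, inner_outerLast_left hG, contractLast_outerLast, Finset.mul_sum]
  refine Finset.sum_congr rfl fun i _ => Finset.sum_congr rfl fun j _ =>
    Finset.sum_congr rfl fun i' _ => Finset.sum_congr rfl fun j' _ => ?_
  rw [Matrix.smul_apply, smul_eq_mul]
  ring

theorem inner_metric_left_eq_zero {g : Matrix ι ι ℝ} (hG : G.IsSymm) (hGgG : G * g * G = G)
    (c : ι → ℝ) (w : ι → ι → ι → ℝ) (hw : ∀ i, ∑ j, ∑ k, G j k * w i j k = 0) :
    inner G (fun i j k => g j k * c i) w = 0 := by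
  have hGgG' : ∀ j' k', ∑ j, ∑ k, G j j' * g j k * G k k' = G j' k' := fun j' k' => by
    conv_rhs => rw [← hGgG]
    simp only [mul_apply, Finset.sum_mul, hG.apply j']
    exact Finset.sum_comm
  rw [inner_apply]
  refine Finset.sum_eq_zero fun i _ => ?_
  rw [Finset.sum_congr rfl fun j _ => Finset.sum_comm, Finset.sum_comm]
  refine Finset.sum_eq_zero fun i' _ => ?_
  calc _ = G i i' * c i * ∑ j', ∑ k', (∑ j, ∑ k, G j j' * g j k * G k k') * w i' j' k' := by
        simp only [Finset.mul_sum, Finset.sum_mul]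
        rw [Finset.sum_congr rfl fun j _ => Finset.sum_comm, Finset.sum_comm]
        refine Finset.sum_congr rfl fun j' _ => ?_
        rw [Finset.sum_congr rfl fun j _ => Finset.sum_comm, Finset.sum_comm]
        refine Finset.sum_congr rfl fun k' _ => Finset.sum_congr rfl fun j _ =>
          Finset.sum_congr rfl fun k _ => by ring
    _ = 0 := by simp only [hGgG', hw, mul_zero]

end Tensor3

open Tensor3 in
theorem p_operators_nonneg_general (g : Matrix (Fin 3) (Fin 3) ℝ) (hg : g.PosDef)
    (ξ : Fin 3 → ℝ)
    (u : Fin 3 → Fin 3 → Fin 3 → ℝ)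
    (htf : ∀ i1, ∑ i2, ∑ j1, g⁻¹ i2 j1 * u i1 i2 j1 = 0) :
    let xiUp : Fin 3 → ℝ := fun i => ∑ j, g⁻¹ i j * ξ j
    let nsq : ℝ := ∑ i, ξ i * xiUp i
    let p1 : Fin 3 → Fin 3 → Fin 3 → ℝ := fun i1 i2 j1 =>
      (∑ h, u i1 i2 h * xiUp h) * ξ j1
    let p2 : Fin 3 → Fin 3 → Fin 3 → ℝ := fun i1 i2 j1 =>
      nsq * u i1 i2 j1 - (∑ h, u i1 i2 h * xiUp h) * ξ j1
    let p3 : Fin 3 → Fin 3 → Fin 3 → ℝ := fun i1 i2 j1 =>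
      nsq * u i1 i2 j1 - g i2 j1 * (∑ r, ∑ h, xiUp r * xiUp h * u r i1 h)
    let ip : (Fin 3 → Fin 3 → Fin 3 → ℝ) → (Fin 3 → Fin 3 → Fin 3 → ℝ) → ℝ := fun v w =>
      ∑ i1, ∑ i2, ∑ j1, ∑ i1', ∑ i2', ∑ j1',
        g⁻¹ i1 i1' * g⁻¹ i2 i2' * g⁻¹ j1 j1' * v i1 i2 j1 * w i1' i2' j1'
    ip p1 u ≥ 0 ∧ ip p2 u ≥ 0 ∧ ip p3 u ≥ 0 := by
  intro xiUp nsq p1 p2 p3 ip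
  have hG : g⁻¹.PosSemidef := hg.inv.posSemidef
  have hGsymm : g⁻¹.IsSymm := isHermitian_iff_isSymm.mp hG.isHermitian
  have hGgG : g⁻¹ * g * g⁻¹ = g⁻¹ := by
    rw [nonsing_inv_mul g hg.det_pos.ne'.isUnit, one_mul]
  have hip : ∀ v w, ip v w = inner g⁻¹ v w := fun v w => (inner_apply g⁻¹ v w).symm
  have hnsq : 0 ≤ nsq := by
    have h := hG.dotProduct_mulVec_nonneg ξ
    rw [star_trivial] at h
    exact h
  have hp2 : p2 = nsq • u - p1 := rfl
  have hp3 : p3 = nsq • u - fun i1 i2 j1 => g i2 j1 * ∑ r, ∑ h, xiUp r * xiUp h * u r i1 h := rfl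
  obtain ⟨hp1_nonneg, hp1_le⟩ := (inner g⁻¹).apply_nonneg_and_le_of_apply_self_eq
    (inner_self_nonneg hG) (inner_isSymm hGsymm) hnsq (inner_projection_self hGsymm u ξ)
  refine ⟨(hip p1 u).symm ▸ hp1_nonneg, ?_, ?_⟩
  · rw [hip, hp2, map_sub, map_smul, LinearMap.sub_apply, LinearMap.smul_apply, smul_eq_mul]
    exact sub_nonneg.mpr hp1_le
  · rw [hip, hp3, map_sub, map_smul, LinearMap.sub_apply, LinearMap.smul_apply, smul_eq_mul,
      inner_metric_left_eq_zero hGsymm hGgG _ u htf, sub_zero]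
    exact mul_nonneg hnsq (inner_self_nonneg hG u)

/-- for any trace-free tensor `u` (symmetric in the first two indices) and `ξ ≠ 0`,
the operators `p₁(ξ)u = u_{i1 i2 h} ξ^h ξ_{j1}`,
`p₂(ξ)u = |ξ|²_g u_{i1 i2 j1} − u_{i1 i2 h} ξ^h ξ_{j1}`,
`p₃(ξ)u = |ξ|²_g u_{i1 i2 j1} − g_{i2 j1} ξ^r ξ^h u_{r i1 h}` are all positive semidefinite:
`⟨p_α(ξ)u, u⟩ ≥ 0` for `α = 1, 2, 3`. -/
theorem p_operators_nonneg (g : Matrix (Fin 3) (Fin 3) ℝ) (hg : g.PosDef)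
    (ξ : Fin 3 → ℝ) (hξ : ξ ≠ 0)
    (u : Fin 3 → Fin 3 → Fin 3 → ℝ)
    (husym : ∀ i1 i2 j1, u i1 i2 j1 = u i2 i1 j1)
    (htf : ∀ i1, ∑ i2, ∑ j1, g⁻¹ i2 j1 * u i1 i2 j1 = 0) :
    let xiUp : Fin 3 → ℝ := fun i => ∑ j, g⁻¹ i j * ξ j
    let nsq : ℝ := ∑ i, ξ i * xiUp i
    let p1 : Fin 3 → Fin 3 → Fin 3 → ℝ := fun i1 i2 j1 =>
      (∑ h, u i1 i2 h * xiUp h) * ξ j1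
    let p2 : Fin 3 → Fin 3 → Fin 3 → ℝ := fun i1 i2 j1 =>
      nsq * u i1 i2 j1 - (∑ h, u i1 i2 h * xiUp h) * ξ j1
    let p3 : Fin 3 → Fin 3 → Fin 3 → ℝ := fun i1 i2 j1 =>
      nsq * u i1 i2 j1 - g i2 j1 * (∑ r, ∑ h, xiUp r * xiUp h * u r i1 h)
    let ip : (Fin 3 → Fin 3 → Fin 3 → ℝ) → (Fin 3 → Fin 3 → Fin 3 → ℝ) → ℝ := fun v w =>
      ∑ i1, ∑ i2, ∑ j1, ∑ i1', ∑ i2', ∑ j1',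
        g⁻¹ i1 i1' * g⁻¹ i2 i2' * g⁻¹ j1 j1' * v i1 i2 j1 * w i1' i2' j1'
    ip p1 u ≥ 0 ∧ ip p2 u ≥ 0 ∧ ip p3 u ≥ 0 :=
  p_operators_nonneg_general g hg ξ u htf
end

section
/- Let u be a trace-free 2+1 tensor at a point of a 3-dimensional inner product space (symmetric in first two indices, g^{jk}u_{ijk} = 0, where trace-free means all partial traces with g vanish as implied). Suppose for every orthonormal basis {ξ, η, η̃} with ξ in an open subset U of the unit sphere: u_{ijk} η^i η^j ξ^k = 0 for all η ⟂ ξ. Then u = 0. -/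
/-!
For fixed `y`, the function `x ↦ u(P_x y, P_x y, x)`, where `P_x y = |x|² y - ⟨y, x⟩ x`, is a
polynomial. Normalising `x` and using linearity in the last slot, it vanishes near any unit
vector of `U`, so by the identity theorem it vanishes everywhere: `u(η, η, ξ) = 0` whenever
`η ⊥ ξ`. Testing this on `e_b ⊥ e_a` and `e_b + e_c ⊥ e_a` kills every entry `u_{bca}` with
`a ∉ {b, c}`; the two pairs `e_a ∓ e_c ⊥ e_a ± e_c` give `2 u_{acc} = u_{aaa}`, so the trace
`∑_k u_{akk} = (n + 1) u_{aaa} / 2` forces `u_{aaa} = 0`, and then every entry vanishes.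
-/
open Finset Matrix Topology

namespace Tensor21

variable {n : ℕ}

def cubicForm (u : Fin n → Fin n → Fin n → ℝ) (η ξ : Fin n → ℝ) : ℝ :=
  ∑ i, ∑ j, ∑ k, u i j k * η i * η j * ξ k

def CubicFormVanishesOnOrthogonal (u : Fin n → Fin n → Fin n → ℝ) : Prop :=
  ∀ η ξ, η ⬝ᵥ ξ = 0 → cubicForm u η ξ = 0

section Algebra

variable {u : Fin n → Fin n → Fin n → ℝ}

theorem cubicForm_single_add_single_single (b c a : Fin n) :
    cubicForm u (Pi.single b 1 + Pi.single c 1) (Pi.single a 1) =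
      u b b a + u b c a + u c b a + u c c a := by
  simp only [cubicForm, Pi.add_apply, Pi.single_apply, mul_add, mul_ite, mul_one, mul_zero,
    sum_ite_eq', mem_univ, ↓reduceIte, sum_add_distrib]
  ring

theorem cubicForm_single_add_smul_single (a c : Fin n) (s t : ℝ) :
    cubicForm u (Pi.single a 1 + Pi.single c s) (Pi.single a 1 + Pi.single c t) =
      u a a a + s * (u a c a + u c a a) + s ^ 2 * u c c a +
        t * (u a a c + s * (u a c c + u c a c) + s ^ 2 * u c c c) := by
  simp only [cubicForm, Pi.add_apply, Pi.single_apply, mul_add, mul_ite, mul_one, mul_zero,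
    add_mul, ite_mul, zero_mul, sum_add_distrib, sum_ite_eq', mem_univ, ↓reduceIte]
  ring

theorem single_add_smul_single_dotProduct {a c : Fin n} (hca : c ≠ a) (s t : ℝ) :
    (Pi.single a 1 + Pi.single c s) ⬝ᵥ (Pi.single a 1 + Pi.single c t) = 1 + s * t := by
  simp [dotProduct_add, hca, hca.symm]

theorem apply_self_self_eq_zero_of_ne (h : CubicFormVanishesOnOrthogonal u) {a b : Fin n}
    (hb : b ≠ a) : u b b a = 0 := by
  simpa [cubicForm, Pi.single_apply] using
    h _ _ (by simp [hb] : Pi.single b 1 ⬝ᵥ Pi.single a (1 : ℝ) = 0)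

theorem apply_eq_zero_of_ne_of_ne (husym : ∀ i j k, u i j k = u j i k)
    (h : CubicFormVanishesOnOrthogonal u) {a b c : Fin n} (hb : b ≠ a) (hc : c ≠ a) :
    u b c a = 0 := by
  have := h _ _ (by simp [hb, hc] :
    (Pi.single b 1 + Pi.single c 1) ⬝ᵥ Pi.single a (1 : ℝ) = 0)
  rw [cubicForm_single_add_single_single, apply_self_self_eq_zero_of_ne h hb,
    apply_self_self_eq_zero_of_ne h hc, husym c] at this
  linarith

theorem two_mul_apply_eq_of_ne (husym : ∀ i j k, u i j k = u j i k)
    (h : CubicFormVanishesOnOrthogonal u) {a c : Fin n} (hca : c ≠ a) :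
    2 * u a c c = u a a a := by
  have h₁ := h (Pi.single a 1 + Pi.single c (-1)) (Pi.single a 1 + Pi.single c 1)
    (by rw [single_add_smul_single_dotProduct hca]; norm_num)
  have h₂ := h (Pi.single a 1 + Pi.single c 1) (Pi.single a 1 + Pi.single c (-1))
    (by rw [single_add_smul_single_dotProduct hca]; norm_num)
  rw [cubicForm_single_add_smul_single] at h₁ h₂
  have := apply_self_self_eq_zero_of_ne h hca
  rw [husym c a a, husym c a c] at h₁ h₂
  linarith

theorem apply_self_self_self_eq_zero (husym : ∀ i j k, u i j k = u j i k)
    (htr : ∀ j, ∑ k, u j k k = 0) (h : CubicFormVanishesOnOrthogonal u) (a : Fin n) :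
    u a a a = 0 := by
  have hterm (k : Fin n) : 2 * u a k k = u a a a + if k = a then u a a a else 0 := by
    split_ifs with hk
    · rw [hk]; ring
    · rw [two_mul_apply_eq_of_ne husym h hk, add_zero]
  have := congrArg (2 * ·) (htr a)
  simp only [mul_sum, hterm, sum_add_distrib, sum_const, card_univ, Fintype.card_fin,
    sum_ite_eq', mem_univ, if_true, nsmul_eq_mul, mul_zero] at this
  have : ((n : ℝ) + 1) * u a a a = 0 := by linarith
  exact (mul_eq_zero.mp this).resolve_left (by positivity)

theorem eq_zero_of_cubicFormVanishesOnOrthogonal (husym : ∀ i j k, u i j k = u j i k)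
    (htr : ∀ j, ∑ k, u j k k = 0) (h : CubicFormVanishesOnOrthogonal u) : u = 0 := by
  have hjkk (j k : Fin n) : u j k k = 0 := by
    rcases eq_or_ne k j with rfl | hkj
    · exact apply_self_self_self_eq_zero husym htr h k
    · linarith [two_mul_apply_eq_of_ne husym h hkj, apply_self_self_self_eq_zero husym htr h j]
  ext i j k
  by_cases hkj : k = j
  · rw [hkj, hjkk, Pi.zero_apply, Pi.zero_apply, Pi.zero_apply]
  by_cases hki : k = i
  · rw [hki, husym, hjkk]; rfl
  exact apply_eq_zero_of_ne_of_ne husym h (Ne.symm hki) (Ne.symm hkj)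

end Algebra

section Analysis

variable {u : Fin n → Fin n → Fin n → ℝ}

/-- `|x|²` times the orthogonal projection of `y` onto `x⊥`: the factor `|x|²` keeps it
polynomial in `x`. -/
def perpScaled (x y : Fin n → ℝ) : Fin n → ℝ :=
  (x ⬝ᵥ x) • y - (y ⬝ᵥ x) • x

theorem perpScaled_dotProduct (x y : Fin n → ℝ) : perpScaled x y ⬝ᵥ x = 0 := by
  simp only [perpScaled, dotProduct_comm x, sub_dotProduct, smul_dotProduct, smul_eq_mul]
  ring

theorem perpScaled_of_dotProduct_eq_zero {x y : Fin n → ℝ} (h : y ⬝ᵥ x = 0) :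
    perpScaled x y = (x ⬝ᵥ x) • y := by
  simp [perpScaled, h]

theorem cubicForm_smul_left (c : ℝ) (η ξ : Fin n → ℝ) :
    cubicForm u (c • η) ξ = c ^ 2 * cubicForm u η ξ := by
  simp only [cubicForm, Pi.smul_apply, smul_eq_mul, mul_sum]
  congr! 3 with i - j - k -
  ring

theorem cubicForm_smul_right (c : ℝ) (η ξ : Fin n → ℝ) :
    cubicForm u η (c • ξ) = c * cubicForm u η ξ := by
  simp only [cubicForm, Pi.smul_apply, smul_eq_mul, mul_sum]
  congr! 3 with i - j - k -
  ring

theorem analyticOnNhd_cubicForm_perpScaled (u : Fin n → Fin n → Fin n → ℝ) (y : Fin n → ℝ) :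
    AnalyticOnNhd ℝ (fun x => cubicForm u (perpScaled x y) x) Set.univ := by
  apply ContDiff.analyticOnNhd
  unfold cubicForm perpScaled dotProduct
  fun_prop

variable {U : Set (Fin n → ℝ)} {ξ₀ : Fin n → ℝ}

theorem cubicForm_perpScaled_eventuallyEq_zero (hU : IsOpen U) (hξ₀ : ξ₀ ∈ U)
    (hξ₀1 : ξ₀ ⬝ᵥ ξ₀ = 1)
    (hvan : ∀ ξ ∈ U, ξ ⬝ᵥ ξ = 1 → ∀ η, η ⬝ᵥ ξ = 0 → cubicForm u η ξ = 0) (y : Fin n → ℝ) :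
    (fun x => cubicForm u (perpScaled x y) x) =ᶠ[𝓝 ξ₀] 0 := by
  have hcont : Continuous fun x : Fin n → ℝ => x ⬝ᵥ x := by fun_prop
  have hpos : ∀ᶠ x in 𝓝 ξ₀, 0 < x ⬝ᵥ x :=
    hcont.continuousAt.eventually (lt_mem_nhds (by simp [hξ₀1]))
  have hnormalize : ∀ᶠ x in 𝓝 ξ₀, (√(x ⬝ᵥ x))⁻¹ • x ∈ U := by
    have : ContinuousAt (fun x => (√(x ⬝ᵥ x))⁻¹ • x) ξ₀ :=
      (hcont.continuousAt.sqrt.inv₀ (by simp [hξ₀1])).smul continuousAt_id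
    exact this.preimage_mem_nhds (by simpa [hξ₀1] using hU.mem_nhds hξ₀)
  filter_upwards [hpos, hnormalize] with x hx hxU
  set r := √(x ⬝ᵥ x)
  have hr : 0 < r := Real.sqrt_pos.mpr hx
  have hunit : (r⁻¹ • x) ⬝ᵥ (r⁻¹ • x) = 1 := by
    have hrr : r * r = x ⬝ᵥ x := Real.mul_self_sqrt hx.le
    rw [smul_dotProduct, dotProduct_smul, ← hrr, smul_eq_mul, smul_eq_mul]
    field_simp
  have horth : perpScaled x y ⬝ᵥ (r⁻¹ • x) = 0 := by
    rw [dotProduct_smul, perpScaled_dotProduct, smul_zero]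
  calc cubicForm u (perpScaled x y) x
      = r * cubicForm u (perpScaled x y) (r⁻¹ • x) := by
        rw [cubicForm_smul_right, ← mul_assoc, mul_inv_cancel₀ hr.ne', one_mul]
    _ = 0 := by rw [hvan _ hxU hunit _ horth, mul_zero]

theorem cubicFormVanishesOnOrthogonal_of_isOpen (hU : IsOpen U) (hξ₀ : ξ₀ ∈ U)
    (hξ₀1 : ξ₀ ⬝ᵥ ξ₀ = 1)
    (hvan : ∀ ξ ∈ U, ξ ⬝ᵥ ξ = 1 → ∀ η, η ⬝ᵥ ξ = 0 → cubicForm u η ξ = 0) :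
    CubicFormVanishesOnOrthogonal u := by
  intro η ξ hηξ
  have hF : cubicForm u (perpScaled ξ η) ξ = 0 :=
    (analyticOnNhd_cubicForm_perpScaled u η).eqOn_zero_of_preconnected_of_eventuallyEq_zero
      isPreconnected_univ (Set.mem_univ ξ₀)
      (cubicForm_perpScaled_eventuallyEq_zero hU hξ₀ hξ₀1 hvan η) (Set.mem_univ ξ)
  rcases eq_or_ne ξ 0 with rfl | hξ
  · simpa using cubicForm_smul_right (u := u) 0 η 0
  rw [perpScaled_of_dotProduct_eq_zero hηξ, cubicForm_smul_left] at hF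
  exact (mul_eq_zero.mp hF).resolve_left (pow_ne_zero _ (dotProduct_self_eq_zero.not.mpr hξ))

end Analysis

end Tensor21

theorem kernel_triviality_two_one_general (u : Fin 3 → Fin 3 → Fin 3 → ℝ)
    (husym : ∀ i j k, u i j k = u j i k)
    (htr2 : ∀ j, ∑ k, u j k k = 0)
    (U : Set (Fin 3 → ℝ)) (hU : IsOpen U)
    (hUne : ∃ ξ ∈ U, ∑ i, (ξ i) ^ 2 = 1)
    (hvan : ∀ ξ ∈ U, (∑ i, (ξ i) ^ 2 = 1) →
      ∀ η : Fin 3 → ℝ, (∑ i, η i * ξ i) = 0 →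
        ∑ i, ∑ j, ∑ k, u i j k * η i * η j * ξ k = 0) :
    u = fun _ _ _ => 0 := by
  have hsq (ξ : Fin 3 → ℝ) : ∑ i, ξ i ^ 2 = ξ ⬝ᵥ ξ := by simp [dotProduct, sq]
  obtain ⟨ξ₀, hξ₀U, hξ₀⟩ := hUne
  refine Tensor21.eq_zero_of_cubicFormVanishesOnOrthogonal husym htr2 ?_
  exact Tensor21.cubicFormVanishesOnOrthogonal_of_isOpen hU hξ₀U (hsq ξ₀ ▸ hξ₀)
    fun ξ hξ hξ1 => hvan ξ hξ (hsq ξ ▸ hξ1)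

/-- let `u` be a trace-free 2+1 tensor on `ℝ³` with the standard inner product
(symmetric in its first two indices, with `Σ_k u_{kjk} = Σ_k u_{jkk} = 0` for each `j`).
If for every unit vector `ξ` in a nonempty open set `U` (open subset of `ℝ³` meeting the unit
sphere) and every `η ⟂ ξ` one has `u_{ijk} η^i η^j ξ^k = 0`, then `u = 0`. -/
theorem kernel_triviality_two_one (u : Fin 3 → Fin 3 → Fin 3 → ℝ)
    (husym : ∀ i j k, u i j k = u j i k)
    (htr1 : ∀ j, ∑ k, u k j k = 0)
    (htr2 : ∀ j, ∑ k, u j k k = 0)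
    (U : Set (Fin 3 → ℝ)) (hU : IsOpen U)
    (hUne : ∃ ξ ∈ U, ∑ i, (ξ i) ^ 2 = 1)
    (hvan : ∀ ξ ∈ U, (∑ i, (ξ i) ^ 2 = 1) →
      ∀ η : Fin 3 → ℝ, (∑ i, η i * ξ i) = 0 →
        ∑ i, ∑ j, ∑ k, u i j k * η i * η j * ξ k = 0) :
    u = fun _ _ _ => 0 :=
  kernel_triviality_two_one_general u husym htr2 U hU hUne hvan
end

section
/- The constant-coefficient characteristic ODE system for the Lopatinskij condition has only the trivial bounded solution: if v(t) is a C² map from [0,∞) to trace-free 2+1 tensors over ℝ³ (with the Euclidean metric) satisfying v(0) = 0, v(t) → 0 as t → ∞, and the frozen-coefficient equations D_t v_{i1 i2 3} − (1/5)(D_t v_{i1 3 3} δ_{i2 3} + D_t v_{i2 3 3} δ_{i1 3}) − (1/5) Σ_{r≠3}(v_{i1 r 3} ξ^r δ_{i2 3} + v_{i2 r 3} ξ^r δ_{i1 3}) = 0 together with the analogous equations for j1 ≠ 3 (equation (eq_vijk2) of the paper) for some fixed ξ' ∈ ℝ² \ {0}, then v ≡ 0. -/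
/-!
Order the components of `v` so that the system becomes triangular in the derivatives: first
`v_{ab3}` with `a, b ≠ 3`, then `v_{a33}`, then `v_{333}`, using (eq_vijk1). Once the slice
`v_{··3}` vanishes, (eq_vijk2) for a fixed `j ≠ 3` is the same system for the slice `v_{··j}`, which
vanishes in the same way. At each step the equation expresses the derivative of the new component
through components already known to vanish on `[0, ∞)`, so it is constant there, hence zero as
`v(0) = 0`.
-/

open Set

theorem eqOn_zero_Ici_of_deriv_eq_zero {E : Type*} [NormedAddCommGroup E] [NormedSpace ℝ E]
    {f : ℝ → E} {a : ℝ} (hf : Differentiable ℝ f) (ha : f a = 0)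
    (hderiv : ∀ t, a ≤ t → deriv f t = 0) : EqOn f 0 (Ici a) := fun t ht => by
  have hconst := constant_of_has_deriv_right_zero hf.continuous.continuousOn
    (fun x hx => hderiv x hx.1 ▸ (hf x).hasDerivAt.hasDerivWithinAt) t ⟨ht, le_rfl⟩
  rwa [ha] at hconst

theorem deriv_eq_zero_of_eqOn_zero_Ici {E : Type*} [NormedAddCommGroup E] [NormedSpace ℝ E]
    {f : ℝ → E} {a t : ℝ} (hf : DifferentiableAt ℝ f t) (h : EqOn f 0 (Ici a)) (ht : a ≤ t) :
    deriv f t = 0 :=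
  (uniqueDiffWithinAt_Ici t).eq_deriv _ hf.hasDerivAt.hasDerivWithinAt
    ((hasDerivWithinAt_const t (Ici t) (0 : E)).congr (fun _ hy => h (ht.trans hy)) (h ht))

/-- (eq_vijk1) for a symmetric 2-tensor `u` in place of `v_{··3}`; the index `3` is `2 : Fin 3`. -/
def LopatinskijSystem (ξ : Fin 3 → ℝ) (u : ℝ → Fin 3 → Fin 3 → ℂ) : Prop :=
  ∀ t, 0 ≤ t → ∀ a b : Fin 3,
    -Complex.I * deriv (fun s => u s a b) t
      - (1 / 5) * (-Complex.I * deriv (fun s => u s a 2) t * (if b = 2 then 1 else 0)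
        + -Complex.I * deriv (fun s => u s b 2) t * (if a = 2 then 1 else 0))
      - (1 / 5) * ∑ r, (u t a r * (ξ r : ℂ) * (if b = 2 then 1 else 0)
        + u t b r * (ξ r : ℂ) * (if a = 2 then 1 else 0)) = 0

theorem LopatinskijSystem.eqOn_zero {ξ : Fin 3 → ℝ} {u : ℝ → Fin 3 → Fin 3 → ℂ}
    (hsys : LopatinskijSystem ξ u) (hξ : ξ 2 = 0)
    (hdiff : ∀ a b, Differentiable ℝ fun t => u t a b)
    (hsym : ∀ t a b, u t a b = u t b a) (hu0 : ∀ a b, u 0 a b = 0) (a b : Fin 3) :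
    EqOn (fun t => u t a b) 0 (Ici 0) := by
  have vanish : ∀ a b, (∀ t, 0 ≤ t → Complex.I * deriv (fun s => u s a b) t = 0) →
      EqOn (fun t => u t a b) 0 (Ici 0) := fun a b hd =>
    eqOn_zero_Ici_of_deriv_eq_zero (hdiff a b) (hu0 a b) fun t ht => by
      simpa [Complex.I_ne_zero] using hd t ht
  have hinner : ∀ a b, a ≠ 2 → b ≠ 2 → EqOn (fun t => u t a b) 0 (Ici 0) := by
    intro a b ha hb
    refine vanish a b fun t ht => ?_
    have h := hsys t ht a b
    simp only [ha, hb, if_false, mul_zero, add_zero, Finset.sum_const_zero, sub_zero] at h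
    linear_combination -h
  have hedge : ∀ a, a ≠ 2 → EqOn (fun t => u t a 2) 0 (Ici 0) := by
    intro a ha
    refine vanish a 2 fun t ht => ?_
    have h := hsys t ht a 2
    simp only [Fin.sum_univ_three, ha, hξ, (hinner a 0 ha (by decide) ht : u t a 0 = 0),
      (hinner a 1 ha (by decide) ht : u t a 1 = 0), if_true, if_false, Complex.ofReal_zero,
      Pi.zero_apply, mul_one, mul_zero, zero_mul, add_zero] at h
    linear_combination (-5/4 : ℂ) * h
  have hcorner : EqOn (fun t => u t 2 2) 0 (Ici 0) := by
    refine vanish 2 2 fun t ht => ?_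
    have h := hsys t ht 2 2
    simp only [Fin.sum_univ_three, hξ, hsym t 2 0, hsym t 2 1,
      (hedge 0 (by decide) ht : u t 0 2 = 0), (hedge 1 (by decide) ht : u t 1 2 = 0), if_true,
      Complex.ofReal_zero, Pi.zero_apply, mul_one, mul_zero, zero_mul, add_zero] at h
    linear_combination (-5/3 : ℂ) * h
  by_cases ha : a = 2 <;> by_cases hb : b = 2
  · subst ha hb; exact hcorner
  · subst ha; simpa only [hsym _ 2 b] using hedge b hb
  · subst hb; exact hedge a ha
  · exact hinner a b ha hb

theorem lopatinskijSystem_slice_of_eq_vijk2 {ξ : Fin 3 → ℝ} {v : ℝ → Fin 3 → Fin 3 → Fin 3 → ℂ} {j : Fin 3}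
    (hdiff : ∀ a b, Differentiable ℝ fun t => v t a b 2)
    (hslice : ∀ a b, EqOn (fun t => v t a b 2) 0 (Ici 0))
    (heq : ∀ t, 0 ≤ t → ∀ a b : Fin 3,
      (1 / 2) * (-Complex.I * deriv (fun s => v s a b j) t)
        - (1 / 10) * (-Complex.I * deriv (fun s => v s a 2 j) t * (if b = 2 then 1 else 0)
          + -Complex.I * deriv (fun s => v s b 2 j) t * (if a = 2 then 1 else 0)
          + -Complex.I * deriv (fun s => v s a 2 2) t * (if b = j then 1 else 0)
          + -Complex.I * deriv (fun s => v s b 2 2) t * (if a = j then 1 else 0))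
        + (1 / 2) * v t a b 2 * (ξ j : ℂ)
        - (1 / 10) * ∑ m, (v t a m j * (ξ m : ℂ) * (if b = 2 then 1 else 0)
          + v t b m j * (ξ m : ℂ) * (if a = 2 then 1 else 0)
          + v t a m 2 * (ξ m : ℂ) * (if b = j then 1 else 0)
          + v t b m 2 * (ξ m : ℂ) * (if a = j then 1 else 0)) = 0) :
    LopatinskijSystem ξ fun t a b => v t a b j := by
  intro t ht a b
  have hzero : ∀ a b, v t a b 2 = 0 := fun a b => hslice a b ht
  have hderiv : ∀ a b, deriv (fun s => v s a b 2) t = 0 := fun a b =>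
    deriv_eq_zero_of_eqOn_zero_Ici (hdiff a b t) (hslice a b) ht
  have h := heq t ht a b
  simp only [hzero, hderiv, mul_zero, zero_mul, add_zero] at h
  linear_combination 2 * h

theorem lopatinskij_trivial_solution_general
    (ξ : Fin 3 → ℝ) (hξ3 : ξ 2 = 0)
    (v : ℝ → Fin 3 → Fin 3 → Fin 3 → ℂ)
    (hreg : ∀ i j k, ContDiff ℝ 2 (fun t => v t i j k))
    (hsym : ∀ t i1 i2 j, v t i1 i2 j = v t i2 i1 j)
    (hv0 : v 0 = fun _ _ _ => 0) :
    let δ : Fin 3 → Fin 3 → ℂ := fun i j => if i = j then 1 else 0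
    let Dt : (ℝ → ℂ) → ℝ → ℂ := fun f t => (-Complex.I) * deriv f t
    (∀ t, 0 ≤ t → ∀ i1 i2 : Fin 3,
        Dt (fun s => v s i1 i2 2) t
        - (1 / 5) * (Dt (fun s => v s i1 2 2) t * δ i2 2 + Dt (fun s => v s i2 2 2) t * δ i1 2)
        - (1 / 5) * (∑ r, (v t i1 r 2 * (ξ r : ℂ) * δ i2 2
            + v t i2 r 2 * (ξ r : ℂ) * δ i1 2)) = 0) →
    (∀ t, 0 ≤ t → ∀ i1 i2 j1 : Fin 3, j1 ≠ 2 →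
        (1 / 2) * Dt (fun s => v s i1 i2 j1) t
        - (1 / 10) * (Dt (fun s => v s i1 2 j1) t * δ i2 2 + Dt (fun s => v s i2 2 j1) t * δ i1 2
            + Dt (fun s => v s i1 2 2) t * δ i2 j1 + Dt (fun s => v s i2 2 2) t * δ i1 j1)
        + (1 / 2) * v t i1 i2 2 * (ξ j1 : ℂ)
        - (1 / 10) * (∑ m, (v t i1 m j1 * (ξ m : ℂ) * δ i2 2 + v t i2 m j1 * (ξ m : ℂ) * δ i1 2
            + v t i1 m 2 * (ξ m : ℂ) * δ i2 j1 + v t i2 m 2 * (ξ m : ℂ) * δ i1 j1)) = 0) →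
    ∀ t, 0 ≤ t → v t = fun _ _ _ => 0 := by
  intro δ Dt heq1 heq2
  have hdiff : ∀ i j k, Differentiable ℝ fun t => v t i j k :=
    fun i j k => (hreg i j k).differentiable (by norm_num)
  have hvanish : ∀ j, LopatinskijSystem ξ (fun t a b => v t a b j) →
      ∀ a b, EqOn (fun t => v t a b j) 0 (Ici 0) := fun j hsys =>
    hsys.eqOn_zero hξ3 (fun a b => hdiff a b j) (fun t a b => hsym t a b j)
      (fun a b => congrFun (congrFun (congrFun hv0 a) b) j)
  have hvanish_two := hvanish 2 heq1
  intro t ht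
  funext a b j
  by_cases hj : j = 2
  · subst hj; exact hvanish_two a b ht
  · exact hvanish j (lopatinskijSystem_slice_of_eq_vijk2 (fun a b => hdiff a b 2) hvanish_two
      fun t ht a b => heq2 t ht a b j hj) a b ht

/-- the constant-coefficient characteristic ODE system for the Lopatinskij
condition has only the trivial bounded solution: if `v(t)` is a `C²` map from `[0,∞)` to
trace-free 2+1 tensors over ℝ³ (Euclidean metric; here the "third" index is `2 : Fin 3`)
satisfying `v(0) = 0`, `v(t) → 0` as `t → ∞`, and the frozen-coefficient equations
(eq_vijk1) and (eq_vijk2) of the paper for some fixed `ξ' ∈ ℝ² \ {0}`, then `v ≡ 0`. -/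
theorem lopatinskij_trivial_solution
    (ξ : Fin 3 → ℝ) (hξ3 : ξ 2 = 0) (hξ : ξ ≠ 0)
    (v : ℝ → Fin 3 → Fin 3 → Fin 3 → ℂ)
    (hreg : ∀ i j k, ContDiff ℝ 2 (fun t => v t i j k))
    (hsym : ∀ t i1 i2 j, v t i1 i2 j = v t i2 i1 j)
    (htf : ∀ t i1, ∑ k, v t i1 k k = 0)
    (hv0 : v 0 = fun _ _ _ => 0)
    (hdecay : ∀ i j k, Filter.Tendsto (fun t => v t i j k) Filter.atTop (nhds 0)) :
    let δ : Fin 3 → Fin 3 → ℂ := fun i j => if i = j then 1 else 0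
    let Dt : (ℝ → ℂ) → ℝ → ℂ := fun f t => (-Complex.I) * deriv f t
    (∀ t, 0 ≤ t → ∀ i1 i2 : Fin 3,
        Dt (fun s => v s i1 i2 2) t
        - (1 / 5) * (Dt (fun s => v s i1 2 2) t * δ i2 2 + Dt (fun s => v s i2 2 2) t * δ i1 2)
        - (1 / 5) * (∑ r, (v t i1 r 2 * (ξ r : ℂ) * δ i2 2
            + v t i2 r 2 * (ξ r : ℂ) * δ i1 2)) = 0) →
    (∀ t, 0 ≤ t → ∀ i1 i2 j1 : Fin 3, j1 ≠ 2 →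
        (1 / 2) * Dt (fun s => v s i1 i2 j1) t
        - (1 / 10) * (Dt (fun s => v s i1 2 j1) t * δ i2 2 + Dt (fun s => v s i2 2 j1) t * δ i1 2
            + Dt (fun s => v s i1 2 2) t * δ i2 j1 + Dt (fun s => v s i2 2 2) t * δ i1 j1)
        + (1 / 2) * v t i1 i2 2 * (ξ j1 : ℂ)
        - (1 / 10) * (∑ m, (v t i1 m j1 * (ξ m : ℂ) * δ i2 2 + v t i2 m j1 * (ξ m : ℂ) * δ i1 2
            + v t i1 m 2 * (ξ m : ℂ) * δ i2 j1 + v t i2 m 2 * (ξ m : ℂ) * δ i1 j1)) = 0) →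
    ∀ t, 0 ≤ t → v t = fun _ _ _ => 0 :=
  lopatinskij_trivial_solution_general ξ hξ3 v hreg hsym hv0
end

section
/- The principal symbol of the normal operator of the mixed ray transform on 1+1 tensors over ℝ³ with metric g at (x, ξ) is given explicitly by σ(N)^{ijkℓ}(x,ξ) = −(√π/(3·2^{5/2})) [ −12 g^{ik}|ξ|^{−1}(g^{jℓ} − |ξ|^{−2}ξ^j ξ^ℓ) + 9|ξ|^{−5} ξ^i ξ^j ξ^k ξ^ℓ + 3|ξ|^{−1}(g^{jk}g^{iℓ} + g^{ik}g^{jℓ} + g^{kℓ}g^{ij}) − 3|ξ|^{−3}(g^{ij}ξ^kξ^ℓ + g^{ik}ξ^jξ^ℓ + g^{iℓ}ξ^jξ^k + g^{jk}ξ^iξ^ℓ + g^{jℓ}ξ^iξ^k + g^{kℓ}ξ^iξ^j)], obtained by computing C(−12 g^{ik} ∂²|ξ|/∂ξ_j∂ξ_ℓ + ∂⁴|ξ|³/∂ξ_i∂ξ_j∂ξ_k∂ξ_ℓ) with C = −√π/(3·2^{5/2}). -/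
open Matrix

noncomputable section

/-!
With `Q(ξ) = g^{ij} ξ_i ξ_j` and `ξ^i = g^{ij} ξ_j` we have `|ξ| = Q^{1/2}`,
`|ξ|³ = Q^{3/2}`, `∂_m Q^r = 2r Q^{r-1} ξ^m` and `∂_m ξ^l = g^{lm}` (as `g⁻¹` is symmetric).
So on the open cone `Q > 0` every iterated derivative of `|ξ|` or `|ξ|³` is a sum of terms
`c Q^r g^{..} ξ^{..}`, computed one differentiation at a time by the Leibniz rule; the symbol is
then a polynomial identity in `|ξ|⁻¹`, `g^{ij}` and `ξ^i`.
-/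

open Set

section PartialDerivatives

variable {ι : Type*} [DecidableEq ι]

def partialDeriv (m : ι) (f : (ι → ℝ) → ℝ) (p : ι → ℝ) : ℝ :=
  fderiv ℝ f p (Pi.single m 1)

def HasPartialDerivsAt (f : (ι → ℝ) → ℝ) (f' : ι → ℝ) (p : ι → ℝ) : Prop :=
  ∃ D : (ι → ℝ) →L[ℝ] ℝ, HasFDerivAt f D p ∧ ∀ m, D (Pi.single m 1) = f' m

variable {f g : (ι → ℝ) → ℝ} {f' g' : ι → ℝ} {p : ι → ℝ}

theorem HasPartialDerivsAt.partialDeriv_eq (h : HasPartialDerivsAt f f' p) (m : ι) :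
    partialDeriv m f p = f' m := by
  obtain ⟨D, hD, hDm⟩ := h
  rw [partialDeriv, hD.fderiv, hDm]

theorem HasPartialDerivsAt.congr_partials (h : HasPartialDerivsAt f f' p) (h' : f' = g') :
    HasPartialDerivsAt f g' p :=
  h' ▸ h

theorem hasPartialDerivsAt_apply (i : ι) :
    HasPartialDerivsAt (fun q => q i) (fun m => (Pi.single m 1 : ι → ℝ) i) p :=
  ⟨ContinuousLinearMap.proj i, hasFDerivAt_apply i p, fun _ => rfl⟩

theorem Set.EqOn.partialDeriv_eqOn {U : Set (ι → ℝ)} (hU : IsOpen U)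
    {G : ι → (ι → ℝ) → ℝ} (hfg : EqOn f g U)
    (hg : ∀ q ∈ U, HasPartialDerivsAt g (fun m => G m q) q) (m : ι) :
    EqOn (partialDeriv m f) (G m) U := fun q hq => by
  rw [partialDeriv, (hfg.eventuallyEq_of_mem (hU.mem_nhds hq)).fderiv_eq]
  exact (hg q hq).partialDeriv_eq m

variable [Fintype ι]

theorem HasPartialDerivsAt.const_mul (h : HasPartialDerivsAt f f' p) (c : ℝ) :
    HasPartialDerivsAt (fun q => c * f q) (fun m => c * f' m) p := by
  obtain ⟨D, hD, hDm⟩ := h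
  exact ⟨c • D, hD.const_mul c, fun m => by simp [hDm]⟩

theorem HasPartialDerivsAt.add (hf : HasPartialDerivsAt f f' p)
    (hg : HasPartialDerivsAt g g' p) :
    HasPartialDerivsAt (fun q => f q + g q) (fun m => f' m + g' m) p := by
  obtain ⟨D, hD, hDm⟩ := hf
  obtain ⟨E, hE, hEm⟩ := hg
  exact ⟨D + E, hD.add hE, fun m => by simp [hDm, hEm]⟩

theorem HasPartialDerivsAt.sub (hf : HasPartialDerivsAt f f' p)
    (hg : HasPartialDerivsAt g g' p) :
    HasPartialDerivsAt (fun q => f q - g q) (fun m => f' m - g' m) p := by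
  obtain ⟨D, hD, hDm⟩ := hf
  obtain ⟨E, hE, hEm⟩ := hg
  exact ⟨D - E, hD.sub hE, fun m => by simp [hDm, hEm]⟩

theorem HasPartialDerivsAt.mul (hf : HasPartialDerivsAt f f' p)
    (hg : HasPartialDerivsAt g g' p) :
    HasPartialDerivsAt (fun q => f q * g q) (fun m => f p * g' m + g p * f' m) p := by
  obtain ⟨D, hD, hDm⟩ := hf
  obtain ⟨E, hE, hEm⟩ := hg
  exact ⟨f p • E + g p • D, hD.mul hE, fun m => by simp [hDm, hEm]⟩

theorem HasPartialDerivsAt.sum {κ : Type*} [Fintype κ] {F : κ → (ι → ℝ) → ℝ}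
    {F' : κ → ι → ℝ} (h : ∀ a, HasPartialDerivsAt (F a) (F' a) p) :
    HasPartialDerivsAt (fun q => ∑ a, F a q) (fun m => ∑ a, F' a m) p := by
  choose D hD hDm using h
  exact ⟨∑ a, D a, HasFDerivAt.fun_sum fun a _ => hD a, fun m => by simp [hDm]⟩

theorem HasDerivAt.comp_hasPartialDerivsAt {φ : ℝ → ℝ} {φ' : ℝ} (hφ : HasDerivAt φ φ' (f p))
    (hf : HasPartialDerivsAt f f' p) :
    HasPartialDerivsAt (fun q => φ (f q)) (fun m => φ' * f' m) p := by
  obtain ⟨D, hD, hDm⟩ := hf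
  exact ⟨φ' • D, hφ.comp_hasFDerivAt p hD, fun m => by simp [hDm]⟩

end PartialDerivatives

theorem rpow_neg_div_two_eq_inv_sqrt_pow {x : ℝ} (hx : 0 ≤ x) (k : ℕ) :
    x ^ (-(k : ℝ) / 2) = (√x ^ k)⁻¹ := by
  rw [Real.sqrt_eq_rpow, ← Real.rpow_natCast, ← Real.rpow_mul hx, ← Real.rpow_neg hx]
  ring_nf

section QuadraticForm

variable {ι : Type*} [Fintype ι] {A : Matrix ι ι ℝ} {p : ι → ℝ}

def quadForm (A : Matrix ι ι ℝ) (p : ι → ℝ) : ℝ := ∑ i, ∑ j, A i j * p i * p j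

theorem continuous_quadForm (A : Matrix ι ι ℝ) : Continuous (quadForm A) := by
  unfold quadForm
  fun_prop

theorem isOpen_quadForm_pos (A : Matrix ι ι ℝ) : IsOpen {q | 0 < quadForm A q} :=
  isOpen_lt continuous_const (continuous_quadForm A)

theorem Matrix.PosDef.quadForm_pos (hA : A.PosDef) (hp : p ≠ 0) : 0 < quadForm A p := by
  refine (hA.dotProduct_mulVec_pos hp).trans_eq ?_
  simp only [quadForm, dotProduct, mulVec, star_trivial, Finset.mul_sum]
  exact Finset.sum_congr rfl fun i _ => Finset.sum_congr rfl fun j _ => by ring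

variable [DecidableEq ι]

theorem hasPartialDerivsAt_mulVec_apply (A : Matrix ι ι ℝ) (l : ι) :
    HasPartialDerivsAt (fun q => (A *ᵥ q) l) (fun m => A l m) p := by
  have h := HasPartialDerivsAt.sum (p := p) fun j =>
    (hasPartialDerivsAt_apply j).const_mul (A l j)
  simpa [mulVec, dotProduct, Pi.single_apply] using h

theorem hasPartialDerivsAt_quadForm (hA : A.IsSymm) :
    HasPartialDerivsAt (quadForm A) (fun m => 2 * (A *ᵥ p) m) p := by
  have h := HasPartialDerivsAt.sum (p := p) fun i => HasPartialDerivsAt.sum fun j =>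
    ((hasPartialDerivsAt_apply i).const_mul (A i j)).mul (hasPartialDerivsAt_apply j)
  refine h.congr_partials (funext fun m => ?_)
  simp [Finset.sum_add_distrib, Pi.single_apply, mulVec, dotProduct, hA.apply m, mul_comm (p _),
    two_mul]

-- `s = r - 1` is a parameter so that callers can give it in normal form (`-3/2`, not `-1/2 - 1`).
theorem hasPartialDerivsAt_quadForm_rpow (hA : A.IsSymm) (hp : 0 < quadForm A p) {r s : ℝ}
    (hrs : r - 1 = s) :
    HasPartialDerivsAt (fun q => quadForm A q ^ r)
      (fun m => 2 * r * quadForm A p ^ s * (A *ᵥ p) m) p := by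
  refine ((Real.hasDerivAt_rpow_const (Or.inl hp.ne')).comp_hasPartialDerivsAt
    (hasPartialDerivsAt_quadForm hA)).congr_partials (funext fun m => ?_)
  rw [hrs]
  ring

theorem hasPartialDerivsAt_quadForm_rpow_mul_mulVec (hA : A.IsSymm) (hp : 0 < quadForm A p)
    {r s : ℝ} (hrs : r - 1 = s) (l : ι) :
    HasPartialDerivsAt (fun q => quadForm A q ^ r * (A *ᵥ q) l)
      (fun j => quadForm A p ^ r * A j l
        + 2 * r * quadForm A p ^ s * (A *ᵥ p) j * (A *ᵥ p) l) p := by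
  refine ((hasPartialDerivsAt_quadForm_rpow hA hp hrs).mul
    (hasPartialDerivsAt_mulVec_apply A l)).congr_partials (funext fun j => ?_)
  rw [hA.apply]
  ring

theorem partialDeriv_partialDeriv_sqrt_quadForm (hA : A.IsSymm) (hp : 0 < quadForm A p)
    (j l : ι) :
    partialDeriv j (partialDeriv l fun q => √(quadForm A q)) p
      = A j l / √(quadForm A p) - (A *ᵥ p) j * (A *ᵥ p) l / √(quadForm A p) ^ 3 := by
  have hU := isOpen_quadForm_pos A
  have h1 := EqOn.partialDeriv_eqOn hU (g := fun q => quadForm A q ^ (1/2 : ℝ))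
    (G := fun l q => quadForm A q ^ (-1/2 : ℝ) * (A *ᵥ q) l)
    (fun q _ => Real.sqrt_eq_rpow _)
    (fun q hq => (hasPartialDerivsAt_quadForm_rpow hA hq (s := -1/2) (by norm_num)).congr_partials
      (funext fun j => by ring)) l
  have h2 := h1.partialDeriv_eqOn hU
    (fun q hq => hasPartialDerivsAt_quadForm_rpow_mul_mulVec hA hq (s := -3/2) (by norm_num) l) j
  have e1 : quadForm A p ^ (-1/2 : ℝ) = (√(quadForm A p))⁻¹ := by
    simpa using rpow_neg_div_two_eq_inv_sqrt_pow hp.le 1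
  have e3 : quadForm A p ^ (-3/2 : ℝ) = (√(quadForm A p) ^ 3)⁻¹ := by
    simpa using rpow_neg_div_two_eq_inv_sqrt_pow hp.le 3
  rw [h2 hp]
  dsimp only
  rw [e1, e3]
  ring

theorem eqOn_partialDeriv_three_sqrt_quadForm_pow_three (hA : A.IsSymm) (j k l : ι) :
    EqOn (partialDeriv j (partialDeriv k (partialDeriv l fun q => √(quadForm A q) ^ 3)))
      (fun q => 3 * ((A j k * (A *ᵥ q) l + A j l * (A *ᵥ q) k + A k l * (A *ᵥ q) j)
          * quadForm A q ^ (-1/2 : ℝ)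
        - quadForm A q ^ (-3/2 : ℝ) * (A *ᵥ q) j * (A *ᵥ q) k * (A *ᵥ q) l))
      {q | 0 < quadForm A q} := by
  have hU := isOpen_quadForm_pos A
  have h0 : EqOn (fun q => √(quadForm A q) ^ 3) (fun q => quadForm A q ^ (3/2 : ℝ))
      {q | 0 < quadForm A q} := fun q hq => by
    dsimp only
    rw [Real.sqrt_eq_rpow, ← Real.rpow_natCast, ← Real.rpow_mul (le_of_lt hq)]
    norm_num
  have h1 := h0.partialDeriv_eqOn hU
    (G := fun l q => 3 * (quadForm A q ^ (1/2 : ℝ) * (A *ᵥ q) l))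
    (fun q hq => (hasPartialDerivsAt_quadForm_rpow hA hq (s := 1/2) (by norm_num)).congr_partials
      (funext fun j => by ring)) l
  have h2 := h1.partialDeriv_eqOn hU
    (G := fun k q => 3 * (A k l * quadForm A q ^ (1/2 : ℝ)
      + quadForm A q ^ (-1/2 : ℝ) * (A *ᵥ q) k * (A *ᵥ q) l))
    (fun q hq => ((hasPartialDerivsAt_quadForm_rpow_mul_mulVec hA hq (s := -1/2) (by norm_num)
      l).const_mul 3).congr_partials (funext fun k => by ring)) k
  intro q hq
  rw [h2.partialDeriv_eqOn hU (fun q hq =>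
    (((hasPartialDerivsAt_quadForm_rpow hA hq (s := -1/2) (by norm_num)).const_mul (A k l)).add
      ((hasPartialDerivsAt_quadForm_rpow_mul_mulVec hA hq (s := -3/2) (by norm_num) k).mul
        (hasPartialDerivsAt_mulVec_apply A l))).const_mul 3) j hq]
  dsimp only
  rw [hA.apply j l]
  ring

theorem partialDeriv_four_sqrt_quadForm_pow_three (hA : A.IsSymm) (hp : 0 < quadForm A p)
    (i j k l : ι) :
    partialDeriv i (partialDeriv j (partialDeriv k (partialDeriv l
      fun q => √(quadForm A q) ^ 3))) p
      = 9 * (A *ᵥ p) i * (A *ᵥ p) j * (A *ᵥ p) k * (A *ᵥ p) l / √(quadForm A p) ^ 5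
        + 3 * (A j k * A i l + A i k * A j l + A k l * A i j) / √(quadForm A p)
        - 3 * (A i j * (A *ᵥ p) k * (A *ᵥ p) l + A i k * (A *ᵥ p) j * (A *ᵥ p) l
          + A i l * (A *ᵥ p) j * (A *ᵥ p) k + A j k * (A *ᵥ p) i * (A *ᵥ p) l
          + A j l * (A *ᵥ p) i * (A *ᵥ p) k + A k l * (A *ᵥ p) i * (A *ᵥ p) j)
          / √(quadForm A p) ^ 3 := by
  have hu (q : ι → ℝ) (m : ι) := hasPartialDerivsAt_mulVec_apply A (p := q) m
  have h4 := (eqOn_partialDeriv_three_sqrt_quadForm_pow_three hA j k l).partialDeriv_eqOn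
    (isOpen_quadForm_pos A) (fun q hq =>
      have hlin := (((hu q l).const_mul (A j k)).add ((hu q k).const_mul (A j l))).add
        ((hu q j).const_mul (A k l))
      have hcub := ((hasPartialDerivsAt_quadForm_rpow_mul_mulVec hA hq (s := -5/2) (by norm_num)
        j).mul (hu q k)).mul (hu q l)
      ((hlin.mul (hasPartialDerivsAt_quadForm_rpow hA hq (s := -3/2) (by norm_num))).sub
        hcub).const_mul 3) i hp
  have e1 : quadForm A p ^ (-1/2 : ℝ) = (√(quadForm A p))⁻¹ := by
    simpa using rpow_neg_div_two_eq_inv_sqrt_pow hp.le 1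
  have e3 : quadForm A p ^ (-3/2 : ℝ) = (√(quadForm A p) ^ 3)⁻¹ := by
    simpa using rpow_neg_div_two_eq_inv_sqrt_pow hp.le 3
  have e5 : quadForm A p ^ (-5/2 : ℝ) = (√(quadForm A p) ^ 5)⁻¹ := by
    simpa using rpow_neg_div_two_eq_inv_sqrt_pow hp.le 5
  rw [h4]
  dsimp only
  rw [e1, e3, e5, hA.apply i j, hA.apply i k, hA.apply i l]
  ring

end QuadraticForm

/-- the principal symbol of the normal operator of the mixed ray transform on
1+1 tensors over ℝ³ with metric `g` at `(x, ξ)`: the expression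
`C(−12 g^{ik} ∂²|ξ|/∂ξ_j∂ξ_ℓ + ∂⁴|ξ|³/∂ξ_i∂ξ_j∂ξ_k∂ξ_ℓ)` with `C = −√π/(3·2^{5/2})` equals
the stated explicit tensor expression. -/
theorem normal_operator_principal_symbol (g : Matrix (Fin 3) (Fin 3) ℝ) (hg : g.PosDef)
    (ξ : Fin 3 → ℝ) (hξ : ξ ≠ 0) :
    let gup := g⁻¹
    let nrm : (Fin 3 → ℝ) → ℝ := fun p => Real.sqrt (∑ i, ∑ j, gup i j * p i * p j)
    let pd : Fin 3 → ((Fin 3 → ℝ) → ℝ) → ((Fin 3 → ℝ) → ℝ) := fun m f p =>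
      fderiv ℝ f p (Pi.single m 1)
    let xiUp : Fin 3 → ℝ := fun i => ∑ j, gup i j * ξ j
    let n : ℝ := nrm ξ
    let C : ℝ := -(Real.sqrt Real.pi / (3 * 2 ^ ((5 : ℝ) / 2)))
    ∀ i j k l : Fin 3,
      C * (-12 * gup i k * pd j (pd l nrm) ξ
          + pd i (pd j (pd k (pd l (fun p => nrm p ^ 3)))) ξ)
      = C * (-12 * gup i k / n * (gup j l - xiUp j * xiUp l / n ^ 2)
          + 9 / n ^ 5 * xiUp i * xiUp j * xiUp k * xiUp l
          + 3 / n * (gup j k * gup i l + gup i k * gup j l + gup k l * gup i j)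
          - 3 / n ^ 3 * (gup i j * xiUp k * xiUp l + gup i k * xiUp j * xiUp l
              + gup i l * xiUp j * xiUp k + gup j k * xiUp i * xiUp l
              + gup j l * xiUp i * xiUp k + gup k l * xiUp i * xiUp j)) := by
  intro gup nrm pd xiUp n C i j k l
  have hA : gup.IsSymm := isHermitian_iff_isSymm.mp hg.inv.isHermitian
  have hQ : 0 < quadForm gup ξ := hg.inv.quadForm_pos hξ
  have h2 : pd j (pd l nrm) ξ = gup j l / n - xiUp j * xiUp l / n ^ 3 :=
    partialDeriv_partialDeriv_sqrt_quadForm hA hQ j l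
  have h4 : pd i (pd j (pd k (pd l (fun p => nrm p ^ 3)))) ξ
      = 9 * xiUp i * xiUp j * xiUp k * xiUp l / n ^ 5
        + 3 * (gup j k * gup i l + gup i k * gup j l + gup k l * gup i j) / n
        - 3 * (gup i j * xiUp k * xiUp l + gup i k * xiUp j * xiUp l
          + gup i l * xiUp j * xiUp k + gup j k * xiUp i * xiUp l
          + gup j l * xiUp i * xiUp k + gup k l * xiUp i * xiUp j) / n ^ 3 :=
    partialDeriv_four_sqrt_quadForm_pow_three hA hQ i j k l
  rw [h2, h4]
  ring
end
end
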